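/- arXiv:2102.05002 — 11 statements merged into one kernel-verified Lean document; each statement's English description precedes it below -/
import Mathlib

section
/- If (X, d) is an ultrametric space, then every slowly oscillating function f : X → ℝ is glacially oscillating. -/
/-!
Fix a base point `c`. In an ultrametric space a step shorter than the distance to `c` does not
change that distance. Take the glacial scale `Kₘ = closedBall c Rₘ`, `nₘ = m`, where `Rₘ ≥ m`
is so large that the ball also contains the bounded set that slow oscillation provides for
`r = m + 1`. Every step of an `S`-chain is then shorter than its distance to `c`, so the whole
chain lies on one sphere about `c`; and by the ultrametric inequality its endpoints are at most
the largest step bound `n_M` apart, while both lie outside `K_M`. Slow oscillation at scale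
`M + 1` compares the values at the endpoints.
-/

open Metric Bornology Set

/-- A function `f : X → ℝ` is slowly oscillating if for all `r, ε > 0` there is a bounded
subset `K` of `X` such that `x, y ∉ K` and `dist x y < r` imply `|f x - f y| < ε`. -/
def SlowlyOscillating {X : Type*} [MetricSpace X] (f : X → ℝ) : Prop :=
  ∀ r ε : ℝ, 0 < r → 0 < ε → ∃ K : Set X, IsBounded K ∧
    ∀ x y : X, x ∉ K → y ∉ K → dist x y < r → |f x - f y| < ε

/-- A glacial scale on `X`: a sequence of pairs `(K i, n i)` of bounded subsets of `X` and
natural numbers such that every pair `(K, r)` of a bounded set and a positive real is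
dominated by some `(K i, n i)`. -/
def IsGlacialScale {X : Type*} [MetricSpace X] (S : ℕ → Set X × ℕ) : Prop :=
  (∀ i, IsBounded (S i).1) ∧
  ∀ (K : Set X) (r : ℝ), IsBounded K → 0 < r → ∃ i, K ⊆ (S i).1 ∧ r < ((S i).2 : ℝ)

/-- An `S`-chain for a glacial scale `S`: consecutive points avoid some `K m` and are at
distance at most `n m` from each other. -/
def IsSChain {X : Type*} [MetricSpace X] (S : ℕ → Set X × ℕ) {n : ℕ}
    (x : Fin (n + 1) → X) : Prop :=
  ∀ i : Fin n, ∃ m : ℕ, x i.castSucc ∉ (S m).1 ∧ x i.succ ∉ (S m).1 ∧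
    dist (x i.castSucc) (x i.succ) ≤ ((S m).2 : ℝ)

/-- A function `f : X → ℝ` is glacially oscillating if for each `ε > 0` there is a glacial
scale `S` such that `|f x₁ - f xₙ| < ε` for every `S`-chain `x₁, …, xₙ`. -/
def GlaciallyOscillating {X : Type*} [MetricSpace X] (f : X → ℝ) : Prop :=
  ∀ ε : ℝ, 0 < ε → ∃ S : ℕ → Set X × ℕ, IsGlacialScale S ∧
    ∀ (n : ℕ) (x : Fin (n + 1) → X), IsSChain S x →
      |f (x 0) - f (x (Fin.last n))| < ε

namespace IsUltrametricDist

variable {X : Type*} [PseudoMetricSpace X] [IsUltrametricDist X]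

lemma dist_eq_of_dist_lt {x y c : X} (h : dist x y < dist x c) : dist y c = dist x c := by
  rw [dist_eq_max_of_dist_ne_dist y x c (by rw [dist_comm]; exact h.ne), dist_comm y x,
    max_eq_right h.le]

lemma dist_eq_of_forall_dist_lt {n : ℕ} {x : Fin (n + 1) → X} {c : X}
    (hx : ∀ i : Fin n, dist (x i.castSucc) (x i.succ) < dist (x i.castSucc) c)
    (j : Fin (n + 1)) : dist (x j) c = dist (x 0) c := by
  induction j using Fin.induction with
  | zero => rfl
  | succ i ih => rw [dist_eq_of_dist_lt (hx i), ih]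

lemma dist_le_of_forall_dist_le {n : ℕ} {x : Fin (n + 1) → X} {δ : ℝ} (hδ : 0 ≤ δ)
    (hx : ∀ i : Fin n, dist (x i.castSucc) (x i.succ) ≤ δ) (j : Fin (n + 1)) :
    dist (x 0) (x j) ≤ δ := by
  induction j using Fin.induction with
  | zero => simpa using hδ
  | succ i ih => exact (dist_triangle_max _ (x i.castSucc) _).trans (max_le ih (hx i))

end IsUltrametricDist

section GlacialScale

variable {X : Type*} [MetricSpace X]

lemma isGlacialScale_closedBall (c : X) {R : ℕ → ℝ} (hR : ∀ m : ℕ, (m : ℝ) ≤ R m) :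
    IsGlacialScale fun m => (closedBall c (R m), m) := by
  refine ⟨fun _ => isBounded_closedBall, fun K r hK _ => ?_⟩
  obtain ⟨ρ, hKρ⟩ := hK.subset_closedBall c
  obtain ⟨m, hm⟩ := exists_nat_gt (max ρ r)
  exact ⟨m, hKρ.trans (closedBall_subset_closedBall
    ((le_max_left _ _).trans (hm.le.trans (hR m)))), (le_max_right _ _).trans_lt hm⟩

lemma IsSChain.exists_dist_le_of_closedBall [IsUltrametricDist X] {c : X} {R : ℕ → ℝ}
    (hR : ∀ m : ℕ, (m : ℝ) ≤ R m) {n : ℕ} (hn : 0 < n) {x : Fin (n + 1) → X}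
    (hx : IsSChain (fun m => (closedBall c (R m), m)) x) :
    ∃ m : ℕ, R m < dist (x 0) c ∧ R m < dist (x (Fin.last n)) c ∧
      dist (x 0) (x (Fin.last n)) ≤ m := by
  choose m hout _ hstep using hx
  simp only [mem_closedBall, not_le] at hout
  have hsphere := IsUltrametricDist.dist_eq_of_forall_dist_lt
    fun i => (hstep i).trans_lt ((hR _).trans_lt (hout i))
  have : Nonempty (Fin n) := ⟨⟨0, hn⟩⟩
  obtain ⟨i, -, hi⟩ := Finset.univ.exists_max_image m Finset.univ_nonempty
  refine ⟨m i, ?_, ?_, IsUltrametricDist.dist_le_of_forall_dist_le (Nat.cast_nonneg _)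
    (fun k => (hstep k).trans (mod_cast hi k (Finset.mem_univ k))) _⟩
  · rw [← hsphere i.castSucc]
    exact hout i
  · rw [hsphere, ← hsphere i.castSucc]
    exact hout i

lemma GlaciallyOscillating.of_isEmpty [IsEmpty X] (f : X → ℝ) : GlaciallyOscillating f :=
  fun _ _ => ⟨fun m => (∅, m),
    ⟨fun _ => isBounded_empty, fun _ r _ _ => (exists_nat_gt r).imp fun _ hm =>
      ⟨fun y _ => isEmptyElim y, hm⟩⟩,
    fun _ x _ => isEmptyElim (x 0)⟩

theorem SlowlyOscillating.glaciallyOscillating [IsUltrametricDist X] {f : X → ℝ}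
    (hf : SlowlyOscillating f) : GlaciallyOscillating f := by
  rcases isEmpty_or_nonempty X with _ | ⟨⟨c⟩⟩
  · exact .of_isEmpty f
  intro ε hε
  choose K hK hKf using fun m : ℕ => hf (m + 1) ε (by positivity) hε
  choose ρ hρ using fun m => (hK m).subset_closedBall c
  have hR : ∀ m : ℕ, (m : ℝ) ≤ max (ρ m) m := fun m => le_max_right _ _
  refine ⟨_, isGlacialScale_closedBall c hR, fun n x hx => ?_⟩
  rcases n.eq_zero_or_pos with rfl | hn
  · simpa using hε
  obtain ⟨m, h₀, hlast, hdist⟩ := hx.exists_dist_le_of_closedBall hR hn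
  have not_mem_K : ∀ y, max (ρ m) m < dist y c → y ∉ K m := fun y hy hyK =>
    (mem_closedBall.1 (hρ m hyK)).not_gt ((le_max_left _ _).trans_lt hy)
  exact hKf m _ _ (not_mem_K _ h₀) (not_mem_K _ hlast) (hdist.trans_lt (lt_add_one _))

end GlacialScale

/-- Proposition 3.4: In an ultrametric space every slowly oscillating function is
glacially oscillating. -/
theorem slowlyOscillating_glaciallyOscillating_of_ultrametric
    {X : Type*} [MetricSpace X]
    (hultra : ∀ x y z : X, dist x y ≤ max (dist x z) (dist z y))
    (f : X → ℝ) (hf : SlowlyOscillating f) :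
    GlaciallyOscillating f :=
  have : IsUltrametricDist X := ⟨fun x y z => hultra x z y⟩
  hf.glaciallyOscillating
end

section
/- Suppose f : (X, d_X) → (Y, d_Y) is a coarse, large scale continuous function between metric spaces and g : Y → ℝ. If g is glacially oscillating, then so is g ∘ f. -/
open Metric Bornology Set

/-!
Pull a glacial scale `(K_m, n_m)` of `Y` back along `f`. The sets `f⁻¹(K_m)` are bounded because
`f` is coarse, and they absorb every bounded set of `X` because large scale continuity makes the
image of a bounded set bounded. Large scale continuity also lets us pair each step size `a` with
an index `m` such that points at distance `≤ a` go to points at distance `< n_m`. Then `f` maps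
chains of the pulled-back scale to chains of the original one, so `g ∘ f` inherits the
oscillation bound of `g`.
-/

def LargeScaleContinuous {X Y : Type*} [MetricSpace X] [MetricSpace Y] (f : X → Y) : Prop :=
  ∀ m : ℝ, 0 < m → ∃ M : ℝ, 0 < M ∧ ∀ x y : X, dist x y < m → dist (f x) (f y) < M

def MapsScale {X Y : Type*} [MetricSpace X] [MetricSpace Y] (f : X → Y)
    (S' : ℕ → Set X × ℕ) (S : ℕ → Set Y × ℕ) : Prop :=
  ∀ j, ∃ m, f ⁻¹' (S m).1 ⊆ (S' j).1 ∧
    ∀ x y : X, dist x y ≤ (S' j).2 → dist (f x) (f y) ≤ (S m).2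

section

variable {X Y : Type*} [MetricSpace X] [MetricSpace Y] {f : X → Y}

theorem LargeScaleContinuous.isBounded_image (hf : LargeScaleContinuous f) {K : Set X}
    (hK : IsBounded K) : IsBounded (f '' K) := by
  obtain ⟨C, hC⟩ := isBounded_iff.1 hK
  obtain ⟨M, -, hM⟩ := hf (max C 0 + 1) (by positivity)
  refine isBounded_iff.2 ⟨M, ?_⟩
  rintro _ ⟨x, hx, rfl⟩ _ ⟨y, hy, rfl⟩
  exact (hM x y ((hC hx hy).trans_lt (by linarith [le_max_left C 0]))).le

theorem IsSChain.map {S' : ℕ → Set X × ℕ} {S : ℕ → Set Y × ℕ} (hfS : MapsScale f S' S)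
    {n : ℕ} {x : Fin (n + 1) → X} (hx : IsSChain S' x) : IsSChain S (f ∘ x) := by
  intro i
  obtain ⟨j, hj₁, hj₂, hjdist⟩ := hx i
  obtain ⟨m, hsub, hdist⟩ := hfS j
  exact ⟨m, fun h => hj₁ (hsub h), fun h => hj₂ (hsub h), hdist _ _ hjdist⟩

theorem IsGlacialScale.exists_mapsScale {S : ℕ → Set Y × ℕ} (hS : IsGlacialScale S)
    (hcoarse : ∀ K : Set Y, IsBounded K → IsBounded (f ⁻¹' K)) (hf : LargeScaleContinuous f) :
    ∃ S' : ℕ → Set X × ℕ, IsGlacialScale S' ∧ MapsScale f S' S := by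
  obtain ⟨hSbdd, hSabsorb⟩ := hS
  choose M hMpos hM using fun a : ℕ => hf (a + 1) (by positivity)
  -- `idx a b` has step size beyond `M a` and a set containing `K_b`; `j` encodes the pair `(a, b)`
  choose idx hsub hlt using fun a b : ℕ => hSabsorb (S b).1 (M a) (hSbdd b) (hMpos a)
  refine ⟨fun j => (f ⁻¹' (S (idx j.unpair.1 j.unpair.2)).1, j.unpair.1),
    ⟨fun j => hcoarse _ (hSbdd _), ?_⟩,
    fun j => ⟨_, subset_rfl, fun x y hxy => ((hM _ x y (by linarith)).trans (hlt _ _)).le⟩⟩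
  intro K r hK _
  obtain ⟨b, hb, -⟩ := hSabsorb _ 1 (hf.isBounded_image hK) one_pos
  obtain ⟨a, ha⟩ := exists_nat_gt r
  refine ⟨Nat.pair a b, ?_, ?_⟩ <;> simp only [Nat.unpair_pair]
  · exact (subset_preimage_image f K).trans (preimage_mono (hb.trans (hsub a b)))
  · exact ha

end

/-- Proposition 3.6(a): if `f` is coarse and large scale continuous and `g` is glacially
oscillating, then `g ∘ f` is glacially oscillating. -/
theorem glaciallyOscillating_comp_of_coarse
    {X Y : Type*} [MetricSpace X] [MetricSpace Y] (f : X → Y) (g : Y → ℝ)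
    (hcoarse : ∀ K : Set Y, IsBounded K → IsBounded (f ⁻¹' K))
    (hlsc : ∀ m : ℝ, 0 < m → ∃ M : ℝ, 0 < M ∧
      ∀ x y : X, dist x y < m → dist (f x) (f y) < M)
    (hg : GlaciallyOscillating g) :
    GlaciallyOscillating (g ∘ f) := by
  intro ε hε
  obtain ⟨S, hS, hSε⟩ := hg ε hε
  obtain ⟨S', hS', hfS⟩ := hS.exists_mapsScale hcoarse hlsc
  exact ⟨S', hS', fun n x hx => hSε n (f ∘ x) (hx.map hfS)⟩
end

section
/- If (X, d) is a metric space of asymptotic dimension 0, then every slowly oscillating function f : X → ℝ is glacially oscillating. -/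
/-!
Fix `ε > 0`. For each `m`, asymptotic dimension `0` gives a cover `𝒰 m` of `X` by uniformly
bounded, `(m + 1)`-separated pieces, and slow oscillation gives a bounded set `L m` off which `f`
varies by less than `ε` between points of a common piece. Let `K m` be the union of the pieces of
`𝒰 m` meeting `L m` or the ball of radius `m`; then `(K m, m + 1)` is a glacial scale. In a chain,
let `M` be the largest index used by a step: all steps have length at most `M + 1`, so the chain
stays in one piece of `𝒰 M`, and this piece misses `L M` because the step with index `M` avoids
`K M`. So the endpoints lie in a common piece outside `L M`.
-/

open Metric Bornology Set

section

variable {X : Type*}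

def coverSaturation (𝒰 : Set (Set X)) (A : Set X) : Set X :=
  ⋃₀ {U ∈ 𝒰 | (U ∩ A).Nonempty}

lemma subset_coverSaturation {𝒰 : Set (Set X)} {A : Set X} (hcov : ∀ x, ∃ U ∈ 𝒰, x ∈ U) :
    A ⊆ coverSaturation 𝒰 A :=
  fun a ha ↦
    let ⟨U, hU, haU⟩ := hcov a
    ⟨U, ⟨hU, a, haU, ha⟩, haU⟩

lemma disjoint_of_notMem_coverSaturation {𝒰 : Set (Set X)} {A U : Set X} {y : X} (hU : U ∈ 𝒰)
    (hy : y ∈ U) (h : y ∉ coverSaturation 𝒰 A) : Disjoint U A := by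
  by_contra hUA
  exact h ⟨U, ⟨hU, not_disjoint_iff_nonempty_inter.1 hUA⟩, hy⟩

variable [MetricSpace X]

lemma Bornology.IsBounded.coverSaturation {𝒰 : Set (Set X)} {A : Set X} {B : ℝ}
    (hA : IsBounded A) (hdiam : ∀ U ∈ 𝒰, ∀ x ∈ U, ∀ y ∈ U, dist x y ≤ B) :
    IsBounded (coverSaturation 𝒰 A) := by
  obtain ⟨C, hC⟩ := isBounded_iff.1 hA
  refine isBounded_iff.2 ⟨B + C + B, ?_⟩
  rintro x ⟨U, ⟨hU, a, haU, ha⟩, hxU⟩ y ⟨V, ⟨hV, b, hbV, hb⟩, hyV⟩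
  calc dist x y ≤ dist x a + dist a b + dist b y := dist_triangle4 x a b y
    _ ≤ B + C + B := by
      gcongr
      exacts [hdiam U hU x hxU a haU, hC ha hb, hdiam V hV b hbV y hyV]

lemma chain_mem_of_separated {𝒰 : Set (Set X)} {r : ℝ} (hcov : ∀ x, ∃ U ∈ 𝒰, x ∈ U)
    (hsep : ∀ U ∈ 𝒰, ∀ V ∈ 𝒰, U ≠ V → ∀ x ∈ U, ∀ y ∈ V, r < dist x y)
    {n : ℕ} {x : Fin (n + 1) → X} (hx : ∀ i : Fin n, dist (x i.castSucc) (x i.succ) ≤ r)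
    {U : Set X} (hU : U ∈ 𝒰) (h0 : x 0 ∈ U) (j : Fin (n + 1)) : x j ∈ U := by
  induction j using Fin.induction with
  | zero => exact h0
  | succ i ih =>
    obtain ⟨V, hV, hxV⟩ := hcov (x i.succ)
    obtain rfl : V = U := by
      by_contra hVU
      exact (hsep U hU V hV (Ne.symm hVU) _ ih _ hxV).not_ge (hx i)
    exact hxV

lemma exists_mem_disjoint_of_isSChain {𝒰 : ℕ → Set (Set X)} {K : ℕ → Set X}
    (hcov : ∀ m x, ∃ U ∈ 𝒰 m, x ∈ U)
    (hsep : ∀ m, ∀ U ∈ 𝒰 m, ∀ V ∈ 𝒰 m, U ≠ V → ∀ x ∈ U, ∀ y ∈ V, (m : ℝ) + 1 < dist x y)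
    {n : ℕ} {x : Fin (n + 1 + 1) → X}
    (hx : IsSChain (fun m ↦ (coverSaturation (𝒰 m) (K m), m + 1)) x) :
    ∃ M, ∃ U ∈ 𝒰 M, Disjoint U (K M) ∧ ∀ j, x j ∈ U := by
  choose m hm₁ _ hm₂ using hx
  obtain ⟨i, -, hi⟩ := Finset.univ.exists_max_image m Finset.univ_nonempty
  obtain ⟨U, hU, h0⟩ := hcov (m i) (x 0)
  have hstep : ∀ j : Fin (n + 1), dist (x j.castSucc) (x j.succ) ≤ (m i : ℝ) + 1 := fun j ↦
    (hm₂ j).trans (by push_cast; gcongr; exact hi j (Finset.mem_univ j))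
  have hxU := chain_mem_of_separated (hcov (m i)) (hsep (m i)) hstep hU h0
  exact ⟨m i, U, hU, disjoint_of_notMem_coverSaturation hU (hxU _) (hm₁ i), hxU⟩

variable (X) in
lemma exists_isBounded_eventually_subset :
    ∃ E : ℕ → Set X, (∀ m, IsBounded (E m)) ∧
      ∀ Q, IsBounded Q → ∀ᶠ m in Filter.atTop, Q ⊆ E m := by
  rcases isEmpty_or_nonempty X with _ | ⟨⟨x₀⟩⟩
  · exact ⟨fun _ ↦ ∅, fun _ ↦ isBounded_empty,
      fun _ _ ↦ Filter.Eventually.of_forall fun _ x ↦ isEmptyElim x⟩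
  refine ⟨fun m ↦ closedBall x₀ m, fun _ ↦ isBounded_closedBall, fun Q hQ ↦ ?_⟩
  obtain ⟨R, hR⟩ := hQ.subset_closedBall x₀
  filter_upwards [tendsto_natCast_atTop_atTop.eventually_ge_atTop R] with m hm
  exact hR.trans (closedBall_subset_closedBall hm)

lemma isGlacialScale_of_frequently_subset {K : ℕ → Set X} (hK : ∀ m, IsBounded (K m))
    (h : ∀ Q, IsBounded Q → ∃ᶠ m in Filter.atTop, Q ⊆ K m) :
    IsGlacialScale fun m ↦ (K m, m + 1) := by
  refine ⟨hK, fun Q r hQ _ ↦ ?_⟩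
  obtain ⟨m, hQm, hrm⟩ :=
    ((h Q hQ).and_eventually (tendsto_natCast_atTop_atTop.eventually_gt_atTop r)).exists
  exact ⟨m, hQm, by push_cast; linarith⟩

end

/-- Corollary 3.7: in a metric space of asymptotic dimension 0 every slowly oscillating
function is glacially oscillating. -/
theorem slowlyOscillating_glaciallyOscillating_of_asdimZero
    {X : Type*} [MetricSpace X]
    (hdim : ∀ r : ℝ, 0 < r → ∃ B : ℝ, 0 < B ∧ ∃ 𝒰 : Set (Set X),
      (∀ x : X, ∃ U ∈ 𝒰, x ∈ U) ∧
      (𝒰.Pairwise fun U V => Disjoint U V) ∧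
      (∀ U ∈ 𝒰, ∀ x ∈ U, ∀ y ∈ U, dist x y ≤ B) ∧
      (∀ U ∈ 𝒰, ∀ V ∈ 𝒰, U ≠ V → ∀ x ∈ U, ∀ y ∈ V, r < dist x y))
    (f : X → ℝ) (hf : SlowlyOscillating f) :
    GlaciallyOscillating f := by
  intro ε hε
  choose B hB 𝒰 hcov _ hdiam hsep using fun m : ℕ ↦ hdim (m + 1) (by positivity)
  choose L hL hfL using fun m ↦ hf (B m + 1) ε (by linarith [hB m]) hε
  obtain ⟨E, hE, hEQ⟩ := exists_isBounded_eventually_subset X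
  set K := fun m ↦ coverSaturation (𝒰 m) (E m ∪ L m)
  have hK : IsGlacialScale fun m ↦ (K m, m + 1) :=
    isGlacialScale_of_frequently_subset (fun m ↦ ((hE m).union (hL m)).coverSaturation (hdiam m))
      fun Q hQ ↦ ((hEQ Q hQ).mono fun m hQm ↦
        hQm.trans (subset_union_left.trans (subset_coverSaturation (hcov m)))).frequently
  refine ⟨_, hK, ?_⟩
  rintro (_ | n) x hx
  · simpa using hε
  obtain ⟨M, U, hU, hUK, hxU⟩ := exists_mem_disjoint_of_isSChain hcov hsep hx
  have hxL : ∀ j, x j ∉ L M := fun j hj ↦ hUK.ne_of_mem (hxU j) (Or.inr hj) rfl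
  exact hfL M _ _ (hxL 0) (hxL _) ((hdiam M U hU _ (hxU 0) _ (hxU _)).trans_lt (lt_add_one _))
end

section
/- Given a subset A of a metric space X, the following conditions are equivalent: (1) the characteristic function χ_A of A is glacially oscillating; (2) A is coarsely clopen; (3) there is a glacial scale S with the property that any S-chain starting at a point of A is completely contained in A. -/
open Metric Bornology Set

/-- A subset `A` of a metric space `X` is coarsely clopen if its characteristic function
is slowly oscillating. -/
def CoarselyClopen {X : Type*} [MetricSpace X] (A : Set X) : Prop :=
  SlowlyOscillating (A.indicator fun _ => (1 : ℝ))

/-!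
Two-point `S`-chains are exactly the pairs that slow oscillation controls. For an indicator
function, control to within `1` means that membership in `A` is preserved; so for coarsely
clopen `A` there are bounded sets `K m` outside of which steps of length `≤ m` never cross
the boundary of `A`, and enlarging them by balls `closedBall x₀ m` gives a glacial scale
whose chains stay on one side of `A`. Along such chains `χ_A` is constant.
-/

section

variable {X : Type*}

theorem mem_iff_of_abs_indicator_sub_lt_one {A : Set X} {x y : X}
    (h : |A.indicator (fun _ => (1 : ℝ)) x - A.indicator (fun _ => (1 : ℝ)) y| < 1) :
    x ∈ A ↔ y ∈ A := by
  by_cases hx : x ∈ A <;> by_cases hy : y ∈ A <;> simp_all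

variable [MetricSpace X]

theorem GlaciallyOscillating.slowlyOscillating {f : X → ℝ} (hf : GlaciallyOscillating f) :
    SlowlyOscillating f := by
  intro r ε hr hε
  obtain ⟨S, hS, hchain⟩ := hf ε hε
  obtain ⟨i, -, hi⟩ := hS.2 ∅ r isBounded_empty hr
  refine ⟨(S i).1, hS.1 i, fun x y hx hy hxy => ?_⟩
  have hpair : IsSChain S ![x, y] := by
    intro j
    fin_cases j
    exact ⟨i, by simpa using hx, by simpa using hy, by simpa using by linarith⟩
  simpa using hchain 1 ![x, y] hpair

theorem exists_isGlacialScale_supset (K : ℕ → Set X) (hK : ∀ m, IsBounded (K m)) :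
    ∃ S : ℕ → Set X × ℕ, IsGlacialScale S ∧ ∀ m, K m ⊆ (S m).1 ∧ (S m).2 = m := by
  rcases isEmpty_or_nonempty X with hX | ⟨⟨x₀⟩⟩
  · refine ⟨fun m => (K m, m), ⟨hK, fun L r _ _ => ?_⟩, fun m => ⟨subset_rfl, rfl⟩⟩
    obtain ⟨m, hm⟩ := exists_nat_gt r
    exact ⟨m, fun p _ => isEmptyElim p, hm⟩
  · refine ⟨fun m => (K m ∪ closedBall x₀ m, m),
      ⟨fun m => (hK m).union isBounded_closedBall, fun L r hL _ => ?_⟩,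
      fun m => ⟨subset_union_left, rfl⟩⟩
    obtain ⟨R, hR⟩ := hL.subset_closedBall x₀
    obtain ⟨m, hm⟩ := exists_nat_gt (max R r)
    exact ⟨m, hR.trans <| (closedBall_subset_closedBall ((le_max_left R r).trans hm.le)).trans
      subset_union_right, (le_max_right R r).trans_lt hm⟩

theorem IsSChain.rev {S : ℕ → Set X × ℕ} {n : ℕ} {x : Fin (n + 1) → X} (hx : IsSChain S x) :
    IsSChain S (fun i => x i.rev) := by
  intro i
  obtain ⟨m, hfst, hsnd, hdist⟩ := hx i.rev
  refine ⟨m, ?_, ?_, ?_⟩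
  · simpa [Fin.rev_castSucc] using hsnd
  · simpa [Fin.rev_succ] using hfst
  · simpa [Fin.rev_castSucc, Fin.rev_succ, dist_comm] using hdist

theorem IsSChain.mem_of_step_mem {S : ℕ → Set X × ℕ} {A : Set X}
    (hstep : ∀ m x y, x ∉ (S m).1 → y ∉ (S m).1 → dist x y ≤ (S m).2 → x ∈ A → y ∈ A)
    {n : ℕ} {x : Fin (n + 1) → X} (hx : IsSChain S x) (h₀ : x 0 ∈ A) (i : Fin (n + 1)) :
    x i ∈ A := by
  induction i using Fin.induction with
  | zero => exact h₀
  | succ j ih =>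
    obtain ⟨m, hfst, hsnd, hdist⟩ := hx j
    exact hstep m _ _ hfst hsnd hdist ih

theorem CoarselyClopen.exists_isGlacialScale_chain_mem {A : Set X} (hA : CoarselyClopen A) :
    ∃ S : ℕ → Set X × ℕ, IsGlacialScale S ∧
      ∀ (n : ℕ) (x : Fin (n + 1) → X), IsSChain S x → x 0 ∈ A → ∀ i, x i ∈ A := by
  choose K hKb hK using fun m : ℕ => hA (m + 1) 1 (by positivity) one_pos
  obtain ⟨S, hS, hKS⟩ := exists_isGlacialScale_supset K hKb
  refine ⟨S, hS, fun n x hx h₀ => hx.mem_of_step_mem (fun m x y hx hy hxy => ?_) h₀⟩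
  have hxy' : dist x y < m + 1 := by linarith [(hKS m).2 ▸ hxy]
  exact (mem_iff_of_abs_indicator_sub_lt_one
    (hK m x y (fun h => hx ((hKS m).1 h)) (fun h => hy ((hKS m).1 h)) hxy')).mp

theorem glaciallyOscillating_indicator_of_chain_mem {A : Set X} {S : ℕ → Set X × ℕ}
    (hS : IsGlacialScale S)
    (hA : ∀ (n : ℕ) (x : Fin (n + 1) → X), IsSChain S x → x 0 ∈ A → ∀ i, x i ∈ A) :
    GlaciallyOscillating (A.indicator fun _ => (1 : ℝ)) := by
  refine fun ε hε => ⟨S, hS, fun n x hx => ?_⟩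
  have hends : x 0 ∈ A ↔ x (Fin.last n) ∈ A :=
    ⟨fun h => hA n x hx h _,
      fun h => by simpa using hA n _ hx.rev (by simpa using h) (Fin.last n)⟩
  rwa [indicator_eq_indicator (g := fun _ => (1 : ℝ)) hends rfl, sub_self, abs_zero]

end

/-- Proposition 3.11: for a subset `A` of a metric space, the following are equivalent:
(1) the characteristic function of `A` is glacially oscillating; (2) `A` is coarsely
clopen; (3) there is a glacial scale `S` such that any `S`-chain starting in `A` stays
in `A`. -/
theorem coarselyClopen_tfae
    {X : Type*} [MetricSpace X] (A : Set X) :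
    (GlaciallyOscillating (A.indicator fun _ => (1 : ℝ)) ↔ CoarselyClopen A) ∧
    (CoarselyClopen A ↔ ∃ S : ℕ → Set X × ℕ, IsGlacialScale S ∧
      ∀ (n : ℕ) (x : Fin (n + 1) → X), IsSChain S x → x 0 ∈ A → ∀ i, x i ∈ A) := by
  have h12 : GlaciallyOscillating (A.indicator fun _ => (1 : ℝ)) → CoarselyClopen A :=
    GlaciallyOscillating.slowlyOscillating
  have h23 := fun hA : CoarselyClopen A => hA.exists_isGlacialScale_chain_mem
  have h31 : (∃ S : ℕ → Set X × ℕ, IsGlacialScale S ∧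
      ∀ (n : ℕ) (x : Fin (n + 1) → X), IsSChain S x → x 0 ∈ A → ∀ i, x i ∈ A) →
      GlaciallyOscillating (A.indicator fun _ => (1 : ℝ)) :=
    fun ⟨_, hS, hA⟩ => glaciallyOscillating_indicator_of_chain_mem hS hA
  exact ⟨⟨h12, h31 ∘ h23⟩, ⟨h23, h12 ∘ h31⟩⟩
end

section
/- Given finitely many coarsely clopen subsets A_1, …, A_n of a metric space X, there is a single glacial scale S with the property that, for each j ≤ n, any S-chain starting at a point of A_j is completely contained in A_j. -/
open Metric Bornology Set

/-
An `S`-chain can only leave a coarsely clopen set `A` through a link between two points that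
lie outside some `K m` and are at most `n m` apart. Slow oscillation of `χ_A` at scale `m + 2`
with `ε = 1/2` gives, for each `m`, a bounded set outside of which no such link crosses the
boundary of `A`; for finitely many sets take the union of these bounded sets. Enlarging the
`m`-th one by the ball of radius `m` around a base point and pairing it with `m + 1` yields a
glacial scale.
-/

section

variable {X : Type*} [MetricSpace X]

theorem CoarselyClopen.exists_isBounded_mem_iff {A : Set X} (hA : CoarselyClopen A) {r : ℝ}
    (hr : 0 < r) : ∃ K : Set X, IsBounded K ∧
      ∀ x y, x ∉ K → y ∉ K → dist x y < r → (x ∈ A ↔ y ∈ A) := by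
  obtain ⟨K, hK, hosc⟩ := hA r (1 / 2) hr (by norm_num)
  refine ⟨K, hK, fun x y hx hy hxy => ?_⟩
  have hdiff := hosc x y hx hy hxy
  by_cases hxA : x ∈ A <;> by_cases hyA : y ∈ A <;> simp [hxA, hyA] at hdiff ⊢ <;> norm_num at hdiff

theorem CoarselyClopen.exists_isBounded_forall_mem_iff {ι : Type*} [Finite ι] {A : ι → Set X}
    (hA : ∀ j, CoarselyClopen (A j)) {r : ℝ} (hr : 0 < r) : ∃ K : Set X, IsBounded K ∧
      ∀ x y, x ∉ K → y ∉ K → dist x y < r → ∀ j, (x ∈ A j ↔ y ∈ A j) := by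
  choose K hK hKA using fun j => (hA j).exists_isBounded_mem_iff hr
  refine ⟨⋃ j, K j, isBounded_iUnion.mpr hK, fun x y hx hy hxy j => ?_⟩
  rw [mem_iUnion, not_exists] at hx hy
  exact hKA j x y (hx j) (hy j) hxy

theorem exists_isGlacialScale_forall_subset (L : ℕ → Set X) (hL : ∀ m, IsBounded (L m)) :
    ∃ S : ℕ → Set X × ℕ, IsGlacialScale S ∧ ∀ m, L m ⊆ (S m).1 ∧ (S m).2 = m + 1 := by
  rcases isEmpty_or_nonempty X with hX | ⟨⟨x₀⟩⟩
  · refine ⟨fun m => (L m, m + 1), ⟨hL, fun K r _ _ => ?_⟩, fun m => ⟨subset_rfl, rfl⟩⟩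
    obtain ⟨m, hm⟩ := exists_nat_gt r
    refine ⟨m, by simp [eq_empty_of_isEmpty K], ?_⟩
    push_cast
    linarith
  refine ⟨fun m => (L m ∪ closedBall x₀ m, m + 1),
    ⟨fun m => (hL m).union isBounded_closedBall, fun K r hK _ => ?_⟩,
    fun m => ⟨subset_union_left, rfl⟩⟩
  obtain ⟨R, hR⟩ := hK.subset_closedBall x₀
  obtain ⟨m, hm⟩ := exists_nat_gt (max R r)
  refine ⟨m, hR.trans (subset_union_of_subset_right
    (closedBall_subset_closedBall (le_of_max_le_left hm.le)) _), ?_⟩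
  push_cast
  linarith [le_max_right R r]

theorem IsSChain.mem_of_mem_zero {S : ℕ → Set X × ℕ} {A : Set X}
    (hSA : ∀ m x y, x ∉ (S m).1 → y ∉ (S m).1 → dist x y ≤ (S m).2 → (x ∈ A ↔ y ∈ A))
    {k : ℕ} {x : Fin (k + 1) → X} (hx : IsSChain S x) (h0 : x 0 ∈ A) (i : Fin (k + 1)) :
    x i ∈ A := by
  induction i using Fin.induction with
  | zero => exact h0
  | succ i ih =>
    obtain ⟨m, hi, hi', hdist⟩ := hx i
    exact (hSA m _ _ hi hi' hdist).mp ih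

end

/-- Corollary 3.12: for finitely many coarsely clopen sets there is a single glacial
scale `S` such that any `S`-chain starting in some `A j` stays in `A j`. -/
theorem exists_glacialScale_of_finitely_many_coarselyClopen
    {X : Type*} [MetricSpace X] (n : ℕ) (A : Fin n → Set X)
    (hA : ∀ j, CoarselyClopen (A j)) :
    ∃ S : ℕ → Set X × ℕ, IsGlacialScale S ∧
      ∀ j, ∀ (k : ℕ) (x : Fin (k + 1) → X), IsSChain S x → x 0 ∈ A j → ∀ i, x i ∈ A j := by
  choose L hL hLA using fun m : ℕ =>
    CoarselyClopen.exists_isBounded_forall_mem_iff hA (r := m + 2) (by positivity)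
  obtain ⟨S, hS, hLS⟩ := exists_isGlacialScale_forall_subset L hL
  refine ⟨S, hS, fun j k x hx h0 => hx.mem_of_mem_zero (fun m y z hy hz hyz => ?_) h0⟩
  obtain ⟨hLm, hSm⟩ := hLS m
  rw [hSm] at hyz
  exact hLA m y z (fun h => hy (hLm h)) (fun h => hz (hLm h)) (by push_cast at hyz; linarith) j
end

section
/- Let G be a countable group equipped with a proper left-invariant metric d. A subset A of G is coarsely clopen if and only if it is almost invariant. -/
open Metric Bornology Set

/-- A subset `A` of a group `G` is almost invariant if `A Δ (A·g)` is finite for every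
`g : G`. -/
def AlmostInvariant {G : Type*} [Group G] (A : Set G) : Prop :=
  ∀ g : G, (symmDiff A ((fun a => a * g) '' A)).Finite

/-!
Both notions say that membership in `A` is eventually constant along short steps. By left
invariance, the pairs `(z * g⁻¹, z)` are exactly the pairs at distance `dist 1 g`, and `z` lies in
`A Δ (A·g)` precisely when `A` separates such a pair. Since bounded sets are finite, "outside a
bounded set" and "outside a finite set" coincide, and a ball around `1` contains only finitely many
`g`.
-/

theorem coarselyClopen_iff_forall_exists_isBounded {X : Type*} [MetricSpace X] (A : Set X) :
    CoarselyClopen A ↔ ∀ r : ℝ, 0 < r → ∃ K : Set X, IsBounded K ∧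
      ∀ x y : X, x ∉ K → y ∉ K → dist x y < r → (x ∈ A ↔ y ∈ A) := by
  constructor
  · intro h r hr
    obtain ⟨K, hK, hKA⟩ := h r 1 hr one_pos
    refine ⟨K, hK, fun x y hx hy hxy => ?_⟩
    have hlt := hKA x y hx hy hxy
    by_cases hxA : x ∈ A <;> by_cases hyA : y ∈ A <;> simp_all
  · intro h r ε hr hε
    obtain ⟨K, hK, hKA⟩ := h r hr
    refine ⟨K, hK, fun x y hx hy hxy => ?_⟩
    have hiff := hKA x y hx hy hxy
    by_cases hxA : x ∈ A <;> simp_all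

section Group

variable {G : Type*} [Group G]

theorem mem_symmDiff_image_mul_right_iff (A : Set G) (g z : G) :
    z ∈ symmDiff A ((fun a => a * g) '' A) ↔ ¬(z ∈ A ↔ z * g⁻¹ ∈ A) := by
  rw [image_mul_right, mem_symmDiff, mem_preimage]
  tauto

variable [MetricSpace G] (hleft : ∀ g h₁ h₂ : G, dist (g * h₁) (g * h₂) = dist h₁ h₂)
  (hproper : ∀ K : Set G, IsBounded K → K.Finite)

include hleft in
theorem dist_eq_dist_one_inv_mul (x y : G) : dist x y = dist 1 (x⁻¹ * y) := by
  rw [← hleft x⁻¹ x y, inv_mul_cancel]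

include hleft hproper in
theorem CoarselyClopen.almostInvariant {A : Set G} (hA : CoarselyClopen A) :
    AlmostInvariant A := by
  intro g
  obtain ⟨K, hK, hKA⟩ :=
    (coarselyClopen_iff_forall_exists_isBounded A).1 hA (dist 1 g + 1) (by positivity)
  have hKfin := hproper K hK
  refine (hKfin.union (hKfin.image (· * g))).subset fun z hmem => ?_
  by_contra hzK
  have hz : z ∉ K := fun h => hzK (Or.inl h)
  have hzg : z * g⁻¹ ∉ K := fun h => hzK (Or.inr ⟨_, h, inv_mul_cancel_right z g⟩)
  have hdist : dist (z * g⁻¹) z < dist 1 g + 1 := by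
    rw [dist_eq_dist_one_inv_mul hleft, mul_inv_rev, inv_inv, inv_mul_cancel_right]
    linarith
  exact (mem_symmDiff_image_mul_right_iff A g z).1 hmem (hKA _ _ hzg hz hdist).symm

include hleft hproper in
theorem AlmostInvariant.coarselyClopen {A : Set G} (hA : AlmostInvariant A) :
    CoarselyClopen A := by
  refine (coarselyClopen_iff_forall_exists_isBounded A).2 fun r _ => ?_
  have hball : (ball (1 : G) r).Finite := hproper _ isBounded_ball
  refine ⟨⋃ g ∈ ball (1 : G) r, symmDiff A ((· * g) '' A),
    (hball.biUnion fun g _ => hA g).isBounded, fun x y _ hy hxy => ?_⟩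
  have hg : x⁻¹ * y ∈ ball (1 : G) r := by
    rwa [mem_ball, dist_comm, ← dist_eq_dist_one_inv_mul hleft]
  have hyA := not_not.1 fun h => hy (mem_biUnion hg ((mem_symmDiff_image_mul_right_iff A _ y).2 h))
  rwa [mul_inv_rev, inv_inv, mul_inv_cancel_left, Iff.comm] at hyA

end Group

theorem coarselyClopen_iff_almostInvariant_general
    {G : Type*} [Group G] [MetricSpace G]
    (hleft : ∀ g h₁ h₂ : G, dist (g * h₁) (g * h₂) = dist h₁ h₂)
    (hproper : ∀ K : Set G, IsBounded K → K.Finite)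
    (A : Set G) :
    CoarselyClopen A ↔ AlmostInvariant A :=
  ⟨CoarselyClopen.almostInvariant hleft hproper,
    AlmostInvariant.coarselyClopen hleft hproper⟩

/-- Observation 5.2: for a countable group with a proper left-invariant metric, a subset
is coarsely clopen iff it is almost invariant. -/
theorem coarselyClopen_iff_almostInvariant
    {G : Type*} [Group G] [Countable G] [MetricSpace G]
    (hleft : ∀ g h₁ h₂ : G, dist (g * h₁) (g * h₂) = dist h₁ h₂)
    (hproper : ∀ K : Set G, IsBounded K → K.Finite)
    (A : Set G) :
    CoarselyClopen A ↔ AlmostInvariant A :=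
  coarselyClopen_iff_almostInvariant_general hleft hproper A
end

section
/- If G is an infinite, locally finite, countable group, then for every natural number n there exist n pairwise disjoint infinite almost invariant subsets of G (that is, G has infinitely many ends). -/
open Set

/-- A group is locally finite if every finite subset is contained in a finite subgroup. -/
def LocallyFiniteGroup (G : Type*) [Group G] : Prop :=
  ∀ S : Set G, S.Finite → ∃ H : Subgroup G, S ⊆ (H : Set G) ∧ (H : Set G).Finite

/-!
The subgroups generated by the finite initial segments of an enumeration of `G` form an
exhausting chain `H₀ ≤ H₁ ≤ ⋯` of finite subgroups. The index `ν g` of the first `Hₖ`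
containing `g` behaves like a non-archimedean norm, so `ν (x * g) = ν x` as soon as
`ν g < ν x`, that is, for all `x` outside the finite subgroup `H_{ν g}`. Hence every union of
level sets of `ν` is almost invariant. Since `G` is infinite, `ν` takes infinitely many values,
and these can be split into `n` infinite classes.
-/

theorem exists_fin_infinite_fibers {α β : Type*} {φ : α → β} (h : (range φ).Infinite)
    (n : ℕ) [NeZero n] : ∃ ψ : β → Fin n, ∀ i, (φ ⁻¹' (ψ ⁻¹' {i})).Infinite := by
  set e : ℕ → β := fun k => h.natEmbedding _ k
  have he : Function.Injective e := Subtype.val_injective.comp (h.natEmbedding _).injective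
  refine ⟨Function.extend e (Fin.ofNat n) 0, fun i => Infinite.preimage' ?_⟩
  refine infinite_of_injective_forall_mem (f := fun j => e (i + j * n)) ?_ fun j => ⟨?_, ?_⟩
  · intro j j' hjj'
    exact Nat.eq_of_mul_eq_mul_right (Nat.pos_of_neZero n) (by simpa using he hjj')
  · ext
    simp [he.extend_apply, Nat.mod_eq_of_lt i.isLt]
  · exact (h.natEmbedding _ _).2

section Group

variable {G : Type*} [Group G]

theorem almostInvariant_preimage {β : Type*} {φ : G → β}
    (hφ : ∀ g, {x | φ (x * g) ≠ φ x}.Finite) (T : Set β) : AlmostInvariant (φ ⁻¹' T) := by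
  intro g
  rw [image_mul_right]
  refine (hφ g⁻¹).subset fun x hx hxg => ?_
  simp [mem_symmDiff, hxg] at hx

theorem LocallyFiniteGroup.finite_closure (hlf : LocallyFiniteGroup G) {S : Set G}
    (hS : S.Finite) : (Subgroup.closure S : Set G).Finite := by
  obtain ⟨K, hSK, hK⟩ := hlf S hS
  exact hK.subset ((Subgroup.closure_le K).2 hSK)

theorem LocallyFiniteGroup.exists_finite_subgroup_chain [Countable G]
    (hlf : LocallyFiniteGroup G) :
    ∃ H : ℕ → Subgroup G, Monotone H ∧ (∀ k, (H k : Set G).Finite) ∧ ∀ g, ∃ k, g ∈ H k := by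
  obtain ⟨e, he⟩ := exists_surjective_nat G
  refine ⟨fun k => Subgroup.closure (e '' Iio k),
    fun k l hkl => Subgroup.closure_mono (image_mono (Iio_subset_Iio hkl)),
    fun k => hlf.finite_closure ((finite_Iio k).image e), fun g => ?_⟩
  obtain ⟨k, rfl⟩ := he g
  exact ⟨k + 1, Subgroup.subset_closure ⟨k, Nat.lt_succ_self k, rfl⟩⟩

/-- Junk value `0` when `g` lies in no `H k`. -/
noncomputable def entryIndex (H : ℕ → Subgroup G) (g : G) : ℕ :=
  sInf {k | g ∈ H k}

variable {H : ℕ → Subgroup G}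

theorem entryIndex_inv (g : G) : entryIndex H g⁻¹ = entryIndex H g := by
  simp only [entryIndex, Subgroup.inv_mem_iff]

theorem mem_iff_entryIndex_le (hmono : Monotone H) (hcov : ∀ g, ∃ k, g ∈ H k) {g : G} {k : ℕ} :
    g ∈ H k ↔ entryIndex H g ≤ k :=
  ⟨fun hg => Nat.sInf_le hg, fun hk => hmono hk (Nat.sInf_mem (hcov g))⟩

theorem entryIndex_mul_le (hmono : Monotone H) (hcov : ∀ g, ∃ k, g ∈ H k) (x y : G) :
    entryIndex H (x * y) ≤ max (entryIndex H x) (entryIndex H y) := by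
  simp only [← mem_iff_entryIndex_le hmono hcov]
  exact mul_mem (hmono (le_max_left _ _) ((mem_iff_entryIndex_le hmono hcov).2 le_rfl))
    (hmono (le_max_right _ _) ((mem_iff_entryIndex_le hmono hcov).2 le_rfl))

theorem entryIndex_mul_eq_left (hmono : Monotone H) (hcov : ∀ g, ∃ k, g ∈ H k)
    {x g : G} (h : entryIndex H g < entryIndex H x) :
    entryIndex H (x * g) = entryIndex H x := by
  have hle := entryIndex_mul_le hmono hcov (x * g) g⁻¹
  rw [mul_inv_cancel_right, entryIndex_inv] at hle
  have hge := entryIndex_mul_le hmono hcov x g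
  omega

theorem finite_setOf_entryIndex_mul_ne (hmono : Monotone H) (hcov : ∀ g, ∃ k, g ∈ H k)
    (hfin : ∀ k, (H k : Set G).Finite) (g : G) :
    {x | entryIndex H (x * g) ≠ entryIndex H x}.Finite :=
  (hfin (entryIndex H g)).subset fun _ hx =>
    (mem_iff_entryIndex_le hmono hcov).2
      (not_lt.1 fun h => hx (entryIndex_mul_eq_left hmono hcov h))

theorem infinite_range_entryIndex [Infinite G] (hmono : Monotone H) (hcov : ∀ g, ∃ k, g ∈ H k)
    (hfin : ∀ k, (H k : Set G).Finite) :
    (range (entryIndex H)).Infinite := by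
  intro hfinite
  obtain ⟨N, hN⟩ := hfinite.bddAbove
  exact infinite_univ ((hfin N).subset fun x _ =>
    (mem_iff_entryIndex_le hmono hcov).2 (hN (mem_range_self x)))

end Group

/-- Proposition 5.6: an infinite locally finite countable group has infinitely many
ends: for every `n` there are `n` pairwise disjoint infinite almost invariant subsets. -/
theorem infinite_ends_of_locallyFinite
    {G : Type*} [Group G] [Countable G] [Infinite G]
    (hlf : LocallyFiniteGroup G) (n : ℕ) :
    ∃ A : Fin n → Set G, (∀ i, (A i).Infinite ∧ AlmostInvariant (A i)) ∧
      Pairwise (Function.onFun Disjoint A) := by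
  obtain rfl | hn := n.eq_zero_or_pos
  · exact ⟨finZeroElim, finZeroElim, fun i => i.elim0⟩
  have : NeZero n := ⟨hn.ne'⟩
  obtain ⟨H, hmono, hfin, hcov⟩ := hlf.exists_finite_subgroup_chain
  obtain ⟨ψ, hψ⟩ := exists_fin_infinite_fibers (infinite_range_entryIndex hmono hcov hfin) n
  refine ⟨fun i => entryIndex H ⁻¹' (ψ ⁻¹' {i}), fun i => ⟨hψ i, ?_⟩, fun i j hij => ?_⟩
  · exact almostInvariant_preimage (finite_setOf_entryIndex_mul_ne hmono hcov hfin) _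
  · exact ((disjoint_singleton.2 hij).preimage ψ).preimage _
end

section
/- Suppose a countable group G is the union of an increasing sequence {G_i}_{i≥1} of subgroups, none of which is locally finite. If A is an infinite almost invariant subset of G, then there is n ≥ 1 such that A ∩ G_n is infinite. -/
open Set

/-! A finitely generated subgroup `H = ⟨T⟩` of `G` acts on `A` by right multiplication up to the
finite defect set of the generators: outside the finitely many cosets meeting that set, each coset
`xH` lies in `A` or misses it. Since `G₀` is not locally finite we may take `H ≤ G₀` infinite.
If `A` met every coset of `H` in a finite set, `A` would meet infinitely many cosets, so some `xH`
with `x ∈ A` avoids the defect set and is contained in `A`, a contradiction. Hence `A ∩ xH` is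
infinite for some `x`, and `xH ⊆ Gₙ` as soon as `x ∈ Gₙ`. -/

open scoped Pointwise

section

variable {G : Type*} [Group G]

theorem exists_finite_closure_infinite_of_not_locallyFiniteGroup {K : Subgroup G}
    (hK : ¬ LocallyFiniteGroup K) :
    ∃ T : Set G, T.Finite ∧ Subgroup.closure T ≤ K ∧ (Subgroup.closure T : Set G).Infinite := by
  simp only [LocallyFiniteGroup, not_forall, not_exists, not_and] at hK
  obtain ⟨S, hS, hSinf⟩ := hK
  refine ⟨K.subtype '' S, hS.image _, ?_, ?_⟩
  · rw [← MonoidHom.map_closure]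
    exact Subgroup.map_subtype_le _
  · rw [← MonoidHom.map_closure, Subgroup.coe_map]
    exact Set.Infinite.image K.subtype_injective.injOn (hSinf _ Subgroup.subset_closure)

theorem AlmostInvariant.finite_setOf_not_mem_iff_mul_mem {A : Set G} (hA : AlmostInvariant A)
    (g : G) : {x | ¬(x ∈ A ↔ x * g ∈ A)}.Finite := by
  refine ((hA g).preimage (mul_left_injective g).injOn).subset fun x hx => ?_
  simp only [mem_ofPred_eq, mem_preimage, Set.mem_symmDiff, mem_image, mul_left_inj,
    exists_eq_right] at hx ⊢
  tauto

theorem mul_mem_iff_of_forall_generator {A T : Set G} {x : G}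
    (hT : ∀ k ∈ Subgroup.closure T, ∀ s ∈ T, (x * k ∈ A ↔ x * k * s ∈ A))
    {h : G} (hh : h ∈ Subgroup.closure T) : x * h ∈ A ↔ x ∈ A := by
  suffices ∀ k ∈ Subgroup.closure T, (x * k ∈ A ↔ x * k * h ∈ A) by
    simpa using (this 1 (one_mem _)).symm
  induction hh using Subgroup.closure_induction with
  | mem s hs => exact fun k hk => hT k hk s hs
  | one => simp
  | mul g₁ g₂ hg₁ _ ih₁ ih₂ =>
    intro k hk
    have h₂ := ih₂ (k * g₁) (mul_mem hk hg₁)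
    rw [← mul_assoc] at h₂
    rw [ih₁ k hk, h₂, mul_assoc _ g₁]
  | inv g hg ih =>
    intro k hk
    simpa [mul_assoc] using (ih (k * g⁻¹) (mul_mem hk (inv_mem hg))).symm

theorem AlmostInvariant.exists_infinite_inter_leftCoset {A T : Set G} (hA : AlmostInvariant A)
    (hAinf : A.Infinite) (hT : T.Finite) (hH : (Subgroup.closure T : Set G).Infinite) :
    ∃ x : G, (A ∩ x • (Subgroup.closure T : Set G)).Infinite := by
  set H := Subgroup.closure T
  by_contra! hfin
  have hfiber (x : G) : A ∩ QuotientGroup.mk ⁻¹' {(x : G ⧸ H)} = A ∩ x • (H : Set G) := by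
    ext y
    simp [mem_leftCoset_iff, QuotientGroup.eq, eq_comm]
  have hcosets : ((QuotientGroup.mk : G → G ⧸ H) '' A).Infinite := fun hfin' =>
    hAinf <| Finite.of_finite_fibers _ hfin' <| by
      rintro _ ⟨x, -, rfl⟩
      rw [hfiber]
      exact hfin x
  set B := ⋃ s ∈ T, {y | ¬(y ∈ A ↔ y * s ∈ A)}
  have hB : B.Finite := hT.biUnion fun s _ => hA.finite_setOf_not_mem_iff_mul_mem s
  obtain ⟨_, ⟨x, hxA, rfl⟩, hxB⟩ := hcosets.exists_notMem_finite (hB.image QuotientGroup.mk)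
  have hcoset : x • (H : Set G) ⊆ A := by
    rintro _ ⟨h, hh, rfl⟩
    refine (mul_mem_iff_of_forall_generator (fun k hk s hs => ?_) hh).2 hxA
    by_contra hbad
    exact hxB ⟨x * k, mem_biUnion hs hbad, QuotientGroup.mk_mul_of_mem x hk⟩
  exact hH.smul_set (inter_eq_right.2 hcoset ▸ hfin x)

end

theorem exists_infinite_inter_of_almostInvariant_general
    {G : Type*} [Group G]
    (Gi : ℕ → Subgroup G) (hmono : Monotone Gi) (hunion : ∀ g : G, ∃ n, g ∈ Gi n)
    (hnlf : ∀ n, ¬ LocallyFiniteGroup (Gi n))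
    (A : Set G) (hAinf : A.Infinite) (hA : AlmostInvariant A) :
    ∃ n, (A ∩ (Gi n : Set G)).Infinite := by
  obtain ⟨T, hT, hTle, hTinf⟩ := exists_finite_closure_infinite_of_not_locallyFiniteGroup (hnlf 0)
  obtain ⟨x, hx⟩ := hA.exists_infinite_inter_leftCoset hAinf hT hTinf
  obtain ⟨n, hxn⟩ := hunion x
  refine ⟨n, hx.mono (inter_subset_inter_right _ ?_)⟩
  rintro _ ⟨h, hh, rfl⟩
  exact mul_mem hxn (hmono n.zero_le (hTle hh))

/-- Proposition 5.7: if a countable group `G` is the union of an increasing sequence of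
non-locally-finite subgroups `Gᵢ` and `A` is an infinite almost invariant subset of `G`,
then `A ∩ Gₙ` is infinite for some `n`. -/
theorem exists_infinite_inter_of_almostInvariant
    {G : Type*} [Group G] [Countable G]
    (Gi : ℕ → Subgroup G) (hmono : Monotone Gi) (hunion : ∀ g : G, ∃ n, g ∈ Gi n)
    (hnlf : ∀ n, ¬ LocallyFiniteGroup (Gi n))
    (A : Set G) (hAinf : A.Infinite) (hA : AlmostInvariant A) :
    ∃ n, (A ∩ (Gi n : Set G)).Infinite :=
  exists_infinite_inter_of_almostInvariant_general Gi hmono hunion hnlf A hAinf hA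
end

section
/- Suppose a countable group G contains three pairwise disjoint NCC sets E₁, E₂, E₃. If G is not locally finite, then G acts trivially on at most one of E₁, E₂, E₃. -/
/-!
Suppose first that `G` is finitely generated, and let `|·|` be a word length. If `A` is almost
invariant on both sides, a geodesic from `x ∈ A` to `y ∉ A` passes through the finite boundary of
`A`, which gives `|x| + |y| ≤ |x⁻¹ * y| + c` and likewise `|x| + |y| ≤ |y * x⁻¹| + c`. Take `z`
outside `A ∪ B` with `|z|` large, and `x ∈ A`, `y ∈ B` longer still: these estimates make both
`x * z` and `y * z` short, while `y * x⁻¹ = (y * z) * (x * z)⁻¹` must be long. So `A ∪ B` is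
cofinite.

In general, since `G` is not locally finite, some finite `S` generates an infinite subgroup `H`.
Either the cosets `f * H`, with `f` on the finite `S`-boundaries of `A` and `B`, cover `G`, and
then `G` is finitely generated; or some coset `x * H` misses both boundaries. A set meeting such a
coset contains it. Some coset meets `A` in an infinite set, and a left translation, which changes
`A` only finitely, moves this piece into `x * H`; hence `x ∈ A`, and likewise `x ∈ B`.
-/

open Set

/-- An NCC set: an almost invariant set that is infinite with infinite complement. -/
def IsNCC {G : Type*} [Group G] (E : Set G) : Prop :=
  AlmostInvariant E ∧ E.Infinite ∧ Eᶜ.Infinite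

/-- `G` acts trivially on `E` if `E Δ (g·E)` is finite for each `g : G`. -/
def ActsTrivially {G : Type*} [Group G] (E : Set G) : Prop :=
  ∀ g : G, (symmDiff E ((fun a => g * a) '' E)).Finite

open scoped Pointwise

section

variable {G : Type*} [Group G]

def rightBoundary (S E : Set G) : Set G :=
  {g | ∃ s ∈ S, ¬(g * s ∈ E ↔ g ∈ E)}

lemma AlmostInvariant.finite_rightBoundary {S E : Set G} (hE : AlmostInvariant E)
    (hS : S.Finite) : (rightBoundary S E).Finite := by
  refine (hS.biUnion fun s _ => hE s⁻¹).subset fun g ⟨s, hs, hg⟩ => mem_biUnion hs ?_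
  rw [image_mul_right, inv_inv, mem_symmDiff, mem_preimage]
  tauto

lemma ActsTrivially.almostInvariant_inv {E : Set G} (hE : ActsTrivially E) :
    AlmostInvariant E⁻¹ := by
  intro g
  have : (fun a => a * g) '' E⁻¹ = ((fun a => g⁻¹ * a) '' E)⁻¹ := by
    ext x; simp [Set.mem_inv]
  rw [this]
  exact (hE g⁻¹).inv

lemma Group.exists_finite_forall_exists_mem_pow [Group.FG G] :
    ∃ T : Set G, T.Finite ∧ (1 : G) ∈ T ∧ T⁻¹ = T ∧ ∀ g : G, ∃ n, g ∈ T ^ n := by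
  obtain ⟨S, hS, hSfin⟩ := Group.fg_iff.1 ‹_›
  refine ⟨insert 1 (S ∪ S⁻¹), (hSfin.union hSfin.inv).insert 1, mem_insert _ _,
    by simp [union_comm], fun g => ?_⟩
  have hg : g ∈ Subgroup.closure S := hS ▸ Subgroup.mem_top g
  induction hg using Subgroup.closure_induction'' with
  | mem s hs => exact ⟨1, by simp [hs]⟩
  | inv_mem s hs => exact ⟨1, by simp [hs]⟩
  | one => exact ⟨0, by simp⟩
  | mul g h _ _ ihg ihh =>
    obtain ⟨m, hm⟩ := ihg
    obtain ⟨n, hn⟩ := ihh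
    exact ⟨m + n, by rw [pow_add]; exact mul_mem_mul hm hn⟩

section WordLength

variable {T : Set G}

-- junk value `0` when `g` lies in no power of `T`
noncomputable def wordLength (T : Set G) (g : G) : ℕ := sInf {n | g ∈ T ^ n}

lemma wordLength_le {g : G} {n : ℕ} (h : g ∈ T ^ n) : wordLength T g ≤ n := Nat.sInf_le h

lemma mem_pow_wordLength (hgen : ∀ g : G, ∃ n, g ∈ T ^ n) (g : G) :
    g ∈ T ^ wordLength T g :=
  Nat.sInf_mem (hgen g)

lemma wordLength_mul_le (hgen : ∀ g : G, ∃ n, g ∈ T ^ n) (g h : G) :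
    wordLength T (g * h) ≤ wordLength T g + wordLength T h :=
  wordLength_le (pow_add T _ _ ▸ mul_mem_mul (mem_pow_wordLength hgen g)
    (mem_pow_wordLength hgen h))

lemma wordLength_inv (hinv : T⁻¹ = T) (g : G) : wordLength T g⁻¹ = wordLength T g := by
  have (n : ℕ) : g⁻¹ ∈ T ^ n ↔ g ∈ T ^ n := by
    rw [← Set.inv_mem_inv, ← inv_pow, hinv, inv_inv]
  simp only [wordLength, this]

lemma Set.Infinite.exists_lt_wordLength {E : Set G} (hE : E.Infinite) (hT : T.Finite)
    (h1 : (1 : G) ∈ T) (hgen : ∀ g : G, ∃ n, g ∈ T ^ n) (n : ℕ) :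
    ∃ x ∈ E, n < wordLength T x := by
  by_contra! hlen
  have hpow : ∀ k, (T ^ k).Finite := fun k => by
    induction k with
    | zero => simp
    | succ k ih => rw [pow_succ]; exact ih.mul hT
  exact hE ((hpow n).subset fun x hx =>
    pow_subset_pow_right h1 (hlen x hx) (mem_pow_wordLength hgen x))

lemma exists_mem_rightBoundary_of_mem_pow {E : Set G} {x w : G} (hx : x ∈ E) (hxw : x * w ∉ E)
    {n : ℕ} (hw : w ∈ T ^ n) : ∃ p ∈ rightBoundary T E, ∃ k m, k + m = n ∧
      x⁻¹ * p ∈ T ^ k ∧ p⁻¹ * (x * w) ∈ T ^ m := by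
  induction n generalizing w with
  | zero => simp_all
  | succ n ih =>
    obtain ⟨w', hw', t, ht, rfl⟩ := (pow_succ T n ▸ hw :)
    by_cases hxw' : x * w' ∈ E
    · exact ⟨x * w', ⟨t, ht, by simp_all [mul_assoc]⟩, n, 1, rfl, by simpa, by simpa [mul_assoc]⟩
    · obtain ⟨p, hp, k, m, hkm, hk, hm⟩ := ih hxw' hw'
      refine ⟨p, hp, k, m + 1, by omega, hk, ?_⟩
      rw [pow_succ, ← mul_assoc, ← mul_assoc]
      exact mul_mem_mul (by simpa [mul_assoc] using hm) ht

end WordLength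

section Crossing

variable {T E : Set G}

variable (hT : T.Finite) (hinv : T⁻¹ = T) (hgen : ∀ g : G, ∃ n, g ∈ T ^ n)
include hT hinv hgen

lemma AlmostInvariant.exists_add_wordLength_le (hE : AlmostInvariant E) :
    ∃ c, ∀ x ∈ E, ∀ y ∉ E,
      wordLength T x + wordLength T y ≤ wordLength T (x⁻¹ * y) + c := by
  obtain ⟨c, hc⟩ := ((hE.finite_rightBoundary hT).image (wordLength T)).bddAbove
  refine ⟨2 * c, fun x hx y hy => ?_⟩
  obtain ⟨p, hp, k, m, hkm, hk, hm⟩ := exists_mem_rightBoundary_of_mem_pow hx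
    (by rwa [mul_inv_cancel_left]) (mem_pow_wordLength hgen (x⁻¹ * y))
  rw [mul_inv_cancel_left] at hm
  have hpc : wordLength T p ≤ c := hc (mem_image_of_mem _ hp)
  have hxp : wordLength T x ≤ wordLength T p + k := calc
    wordLength T x = wordLength T (p * (x⁻¹ * p)⁻¹) := by group
    _ ≤ wordLength T p + wordLength T (x⁻¹ * p)⁻¹ := wordLength_mul_le hgen _ _
    _ ≤ wordLength T p + k := by
      rw [wordLength_inv hinv]; exact Nat.add_le_add_left (wordLength_le hk) _
  have hyp : wordLength T y ≤ wordLength T p + m := calc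
    wordLength T y = wordLength T (p * (p⁻¹ * y)) := by group
    _ ≤ wordLength T p + wordLength T (p⁻¹ * y) := wordLength_mul_le hgen _ _
    _ ≤ wordLength T p + m := Nat.add_le_add_left (wordLength_le hm) _
  omega

lemma ActsTrivially.exists_add_wordLength_le (hE : ActsTrivially E) :
    ∃ c, ∀ x ∈ E, ∀ y ∉ E,
      wordLength T x + wordLength T y ≤ wordLength T (y * x⁻¹) + c := by
  obtain ⟨c, hc⟩ := hE.almostInvariant_inv.exists_add_wordLength_le hT hinv hgen
  refine ⟨c, fun x hx y hy => ?_⟩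
  have := hc x⁻¹ (by simpa) y⁻¹ (by simpa)
  rw [inv_inv, wordLength_inv hinv, wordLength_inv hinv] at this
  rwa [← wordLength_inv hinv (y * x⁻¹), mul_inv_rev, inv_inv]

lemma exists_wordLength_mul_add_le (hE : AlmostInvariant E) (hE' : ActsTrivially E) :
    ∃ c, ∀ x ∈ E, ∀ z ∉ E, wordLength T z ≤ wordLength T x →
      wordLength T (x * z) + wordLength T z ≤ wordLength T x + c := by
  obtain ⟨cr, hr⟩ := hE.exists_add_wordLength_le hT hinv hgen
  obtain ⟨cl, hl⟩ := hE'.exists_add_wordLength_le hT hinv hgen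
  refine ⟨cr + cl, fun x hx z hz hzx => ?_⟩
  by_cases hxz : x * z ∈ E
  · have := hl _ hxz z hz
    rw [mul_inv_rev, mul_inv_cancel_left, wordLength_inv hinv] at this
    omega
  · have := hr x hx _ hxz
    rw [inv_mul_cancel_left] at this
    omega

end Crossing

lemma finite_compl_union_of_fg [Group.FG G] {A B : Set G} (hA : AlmostInvariant A)
    (hA' : ActsTrivially A) (hAinf : A.Infinite) (hB : AlmostInvariant B)
    (hB' : ActsTrivially B) (hBinf : B.Infinite) (hAB : Disjoint A B) :
    (A ∪ B)ᶜ.Finite := by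
  by_contra hCinf
  obtain ⟨T, hT, h1, hinv, hgen⟩ := Group.exists_finite_forall_exists_mem_pow (G := G)
  obtain ⟨a, ha⟩ := exists_wordLength_mul_add_le hT hinv hgen hA hA'
  obtain ⟨b, hb⟩ := exists_wordLength_mul_add_le hT hinv hgen hB hB'
  obtain ⟨l, hl⟩ := hA'.exists_add_wordLength_le hT hinv hgen
  obtain ⟨z, hz, hzlen⟩ := Set.Infinite.exists_lt_wordLength hCinf hT h1 hgen (a + b + l)
  obtain ⟨x, hx, hxlen⟩ := hAinf.exists_lt_wordLength hT h1 hgen (wordLength T z)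
  obtain ⟨y, hy, hylen⟩ := hBinf.exists_lt_wordLength hT h1 hgen (wordLength T z)
  rw [mem_compl_iff, mem_union, not_or] at hz
  have hxz := ha x hx z hz.1 hxlen.le
  have hyz := hb y hy z hz.2 hylen.le
  have hxy := hl x hx y (disjoint_right.1 hAB hy)
  have htri : wordLength T (y * x⁻¹) ≤ wordLength T (y * z) + wordLength T (x * z) := calc
    wordLength T (y * x⁻¹) = wordLength T ((y * z) * (x * z)⁻¹) := by group
    _ ≤ wordLength T (y * z) + wordLength T (x * z)⁻¹ := wordLength_mul_le hgen _ _
    _ = wordLength T (y * z) + wordLength T (x * z) := by rw [wordLength_inv hinv]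
  omega

lemma mul_mem_of_forall_mul_notMem_rightBoundary {S E : Set G} {u : G} (hu : u ∈ E)
    (hclean : ∀ h ∈ Subgroup.closure S, u * h ∉ rightBoundary S E) {h : G}
    (hh : h ∈ Subgroup.closure S) : u * h ∈ E := by
  induction hh using Subgroup.closure_induction_right with
  | one => simpa
  | mul_right h hh s hs ih =>
    by_contra hhs
    exact hclean h hh ⟨s, hs, by rw [← mul_assoc] at hhs; tauto⟩
  | mul_inv_cancel h hh s hs ih =>
    by_contra hhs
    exact hclean _ (mul_mem hh (inv_mem (Subgroup.subset_closure hs)))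
      ⟨s, hs, by rw [mul_assoc, inv_mul_cancel_right]; tauto⟩

lemma ActsTrivially.finite_inter_smul_of_disjoint {E K : Set G} (hE : ActsTrivially E) {x : G}
    (hx : Disjoint E (x • K)) (y : G) : (E ∩ y • K).Finite := by
  set g := x * y⁻¹
  refine ((hE g).preimage (mul_right_injective g).injOn).subset fun v ⟨hvE, hvK⟩ => ?_
  have hgv : g * v ∈ x • K := by
    rw [mem_leftCoset_iff] at hvK ⊢
    simpa [g, mul_assoc] using hvK
  exact Or.inr ⟨⟨v, hvE, rfl⟩, disjoint_right.1 hx hgv⟩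

lemma ActsTrivially.mem_of_forall_mul_notMem_rightBoundary {S E : Set G} (hE : ActsTrivially E)
    (hEinf : E.Infinite) (hS : (Subgroup.closure S : Set G).Infinite)
    (hfin : (rightBoundary S E).Finite) {x : G}
    (hx : ∀ h ∈ Subgroup.closure S, x * h ∉ rightBoundary S E) : x ∈ E := by
  set H := Subgroup.closure S
  by_contra hxE
  have hdisj : Disjoint E (x • (H : Set G)) := by
    refine disjoint_left.2 fun v hv hvx => hxE ?_
    rw [mem_leftCoset_iff] at hvx
    have := mul_mem_of_forall_mul_notMem_rightBoundary hv
      (fun h hh => by simpa [mul_assoc] using hx _ (mul_mem hvx hh)) (inv_mem hvx)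
    simpa using this
  refine hEinf ((hfin.biUnion fun f _ => hE.finite_inter_smul_of_disjoint hdisj f).subset
    fun a ha => ?_)
  by_cases hclean : ∀ h ∈ H, a * h ∉ rightBoundary S E
  · have hsub : a • (H : Set G) ⊆ E := fun v hv => by
      rw [mem_leftCoset_iff] at hv
      simpa using mul_mem_of_forall_mul_notMem_rightBoundary ha hclean hv
    have := hE.finite_inter_smul_of_disjoint hdisj a
    rw [inter_eq_right.2 hsub] at this
    exact absurd this (infinite_smul_set.2 hS)
  · push Not at hclean
    obtain ⟨h, hh, hah⟩ := hclean
    exact mem_biUnion hah ⟨ha, by rw [mem_leftCoset_iff]; simpa using inv_mem hh⟩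

lemma finite_compl_union_of_not_locallyFiniteGroup (hG : ¬LocallyFiniteGroup G) {A B : Set G}
    (hA : AlmostInvariant A) (hA' : ActsTrivially A) (hAinf : A.Infinite)
    (hB : AlmostInvariant B) (hB' : ActsTrivially B) (hBinf : B.Infinite) (hAB : Disjoint A B) :
    (A ∪ B)ᶜ.Finite := by
  obtain ⟨S, hSfin, hS⟩ :
      ∃ S : Set G, S.Finite ∧ ∀ H : Subgroup G, S ⊆ H → (H : Set G).Infinite := by
    simpa [LocallyFiniteGroup] using hG
  set H := Subgroup.closure S
  have hAfin := hA.finite_rightBoundary hSfin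
  have hBfin := hB.finite_rightBoundary hSfin
  by_cases hcov : ∀ x : G, ∃ h ∈ H, x * h ∈ rightBoundary S A ∪ rightBoundary S B
  · have : Group.FG G := by
      refine Group.fg_iff.2 ⟨S ∪ (rightBoundary S A ∪ rightBoundary S B),
        eq_top_iff.2 fun x _ => ?_, hSfin.union (hAfin.union hBfin)⟩
      obtain ⟨h, hh, hxh⟩ := hcov x
      rw [← mul_inv_cancel_right x h]
      exact mul_mem (Subgroup.subset_closure (Or.inr hxh))
        (inv_mem (Subgroup.closure_mono subset_union_left hh))
    exact finite_compl_union_of_fg hA hA' hAinf hB hB' hBinf hAB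
  · push Not at hcov
    obtain ⟨x, hx⟩ := hcov
    have hHinf : (H : Set G).Infinite := hS H Subgroup.subset_closure
    exact absurd (hB'.mem_of_forall_mul_notMem_rightBoundary hBinf hHinf hBfin
        fun h hh hxh => hx h hh (Or.inr hxh))
      (disjoint_left.1 hAB (hA'.mem_of_forall_mul_notMem_rightBoundary hAinf hHinf hAfin
        fun h hh hxh => hx h hh (Or.inl hxh)))

end

theorem actsTrivially_at_most_one_general
    {G : Type*} [Group G]
    (hnlf : ¬ LocallyFiniteGroup G)
    (E₁ E₂ E₃ : Set G) (h₁ : IsNCC E₁) (h₂ : IsNCC E₂) (h₃ : IsNCC E₃)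
    (h₁₂ : Disjoint E₁ E₂) (h₁₃ : Disjoint E₁ E₃) (h₂₃ : Disjoint E₂ E₃) :
    ¬ (ActsTrivially E₁ ∧ ActsTrivially E₂) ∧
    ¬ (ActsTrivially E₁ ∧ ActsTrivially E₃) ∧
    ¬ (ActsTrivially E₂ ∧ ActsTrivially E₃) := by
  have key : ∀ {A B C : Set G}, IsNCC A → IsNCC B → IsNCC C → Disjoint A B → Disjoint A C →
      Disjoint B C → ¬(ActsTrivially A ∧ ActsTrivially B) :=
    fun hA hB hC hAB hAC hBC ⟨hA', hB'⟩ => hC.2.1 <|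
      (finite_compl_union_of_not_locallyFiniteGroup hnlf hA.1 hA' hA.2.1 hB.1 hB' hB.2.1
        hAB).subset (subset_compl_iff_disjoint_left.2 (hAC.union_left hBC))
  exact ⟨key h₁ h₂ h₃ h₁₂ h₁₃ h₂₃, key h₁ h₃ h₂ h₁₃ h₁₂ h₂₃.symm,
    key h₂ h₃ h₁ h₂₃ h₁₂.symm h₁₃.symm⟩

/-- Lemma 5.9: if a countable, non-locally-finite group contains three pairwise disjoint
NCC sets, then it acts trivially on at most one of them. -/
theorem actsTrivially_at_most_one
    {G : Type*} [Group G] [Countable G]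
    (hnlf : ¬ LocallyFiniteGroup G)
    (E₁ E₂ E₃ : Set G) (h₁ : IsNCC E₁) (h₂ : IsNCC E₂) (h₃ : IsNCC E₃)
    (h₁₂ : Disjoint E₁ E₂) (h₁₃ : Disjoint E₁ E₃) (h₂₃ : Disjoint E₂ E₃) :
    ¬ (ActsTrivially E₁ ∧ ActsTrivially E₂) ∧
    ¬ (ActsTrivially E₁ ∧ ActsTrivially E₃) ∧
    ¬ (ActsTrivially E₂ ∧ ActsTrivially E₃) :=
  actsTrivially_at_most_one_general hnlf E₁ E₂ E₃ h₁ h₂ h₃ h₁₂ h₁₃ h₂₃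
end

section
/- Let G be a countable group. If G contains three pairwise disjoint infinite almost invariant subsets, then for every natural number n, G contains n pairwise disjoint infinite almost invariant subsets. (Equivalently: the number of ends of a countable group is either infinite or at most 2.) -/
/-!
If the theorem failed, there would be a maximal family `A₀, …, Aₖ₋₁` (`k ≥ 3`) of disjoint
infinite almost invariant sets: no almost invariant set cuts an `Aᵢ` into two infinite pieces,
and the `Aᵢ` cover `G` up to a finite set. Hence every left translate `g • Aᵢ` is some `Aⱼ` up to
a finite set, and the elements fixing every `Aᵢ` up to finite sets form a subgroup `H` of finite
index.

* `G` finitely generated (Freudenthal–Hopf): take a finite connected set `F` in the Cayley graph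
  containing the boundaries of all `Aᵢ`, and `u` deep inside `A₀` with `u • F` disjoint from `F`.
  The infinite components of `G \ F` inside `A₁` and `A₂` are joined through `F` avoiding
  `u • F ⊆ A₀`, so both lie in one translate `u • Aⱼ`, which is a single `Aⱼ'` up to a finite set.
* Some finitely generated subgroup `K ≤ H` is infinite: `K` cannot lie almost inside both `A₁` and
  `A₂`, so one of them, `C`, contains no right coset of `K`. Leaving `C` along the generators of
  `K` puts every point of `C` in a coset `K p` with `p` in the finite `K`-boundary of `C`; as `C`
  is almost invariant, all cosets `K z` meet `C`, so `G` is generated by `K` and that boundary.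
* Otherwise the countable group `H` is an increasing union of finite subgroups `Lₘ`. Grading
  `A₀ ∩ H` by the first `m` with `c * Lₘ ⊄ A₀` and keeping every other grade gives a set that is
  almost invariant under `H`; lifted to `G` along a transversal of `H`, it cuts `A₀`.
-/

open Set

open Pointwise MulOpposite symmDiff
open scoped RightActions

lemma Set.Infinite.exists_infinite_inter_of_subset_biUnion {ι α : Type*} {I : Set ι}
    (hI : I.Finite) {X : Set α} {Y : ι → Set α} (hX : X.Infinite) (hXY : X ⊆ ⋃ i ∈ I, Y i) :
    ∃ i ∈ I, (X ∩ Y i).Infinite := by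
  by_contra! h
  refine hX ((hI.biUnion h).subset fun x hx => ?_)
  obtain ⟨i, hi, hxi⟩ := mem_iUnion₂.1 (hXY hx)
  exact mem_iUnion₂.2 ⟨i, hi, hx, hxi⟩

lemma Set.Infinite.exists_infinite_subset_infinite_sdiff {α : Type*} {s : Set α}
    (hs : s.Infinite) : ∃ t ⊆ s, t.Infinite ∧ (s \ t).Infinite := by
  set e := hs.natEmbedding
  have he : ∀ {m n}, (e m : α) = e n → m = n := fun h => e.injective (Subtype.ext h)
  refine ⟨range fun n => (e (2 * n) : α), range_subset_iff.2 fun n => (e _).2,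
    infinite_range_of_injective fun m n h => by simpa using he h, ?_⟩
  refine (infinite_range_of_injective (f := fun n => (e (2 * n + 1) : α))
    fun m n h => by simpa using he h).mono ?_
  rintro _ ⟨n, rfl⟩
  refine ⟨(e _).2, fun ⟨m, hm⟩ => ?_⟩
  have := he hm
  omega

section

variable {G : Type*} [Group G] {A B : Set G}

@[simp] lemma mem_op_smul_set_iff {g x : G} : x ∈ A <• g ↔ x * g⁻¹ ∈ A := by
  simp [mem_smul_set_iff_inv_smul_mem]

lemma almostInvariant_iff : AlmostInvariant A ↔ ∀ g : G, (A ∆ (A <• g)).Finite := by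
  simp only [AlmostInvariant, ← op_smul_eq_mul, image_smul]

namespace AlmostInvariant

lemma finite_sdiff_op_smul (hA : AlmostInvariant A) (g : G) : (A \ A <• g).Finite :=
  (almostInvariant_iff.1 hA g).subset subset_union_left

lemma finite_op_smul_sdiff (hA : AlmostInvariant A) (g : G) : (A <• g \ A).Finite :=
  (almostInvariant_iff.1 hA g).subset subset_union_right

lemma compl (hA : AlmostInvariant A) : AlmostInvariant Aᶜ :=
  almostInvariant_iff.2 fun g => by
    simpa [smul_set_compl, compl_symmDiff_compl] using almostInvariant_iff.1 hA g

lemma iUnion {ι : Type*} [Finite ι] {A : ι → Set G} (hA : ∀ i, AlmostInvariant (A i)) :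
    AlmostInvariant (⋃ i, A i) :=
  almostInvariant_iff.2 fun g => by
    rw [smul_set_iUnion]
    exact (finite_iUnion fun i => almostInvariant_iff.1 (hA i) g).subset
      iUnion_symmDiff_iUnion_subset

lemma union (hA : AlmostInvariant A) (hB : AlmostInvariant B) : AlmostInvariant (A ∪ B) :=
  almostInvariant_iff.2 fun g => by
    rw [smul_set_union]
    exact ((almostInvariant_iff.1 hA g).union (almostInvariant_iff.1 hB g)).subset
      union_symmDiff_union_subset

lemma inter (hA : AlmostInvariant A) (hB : AlmostInvariant B) : AlmostInvariant (A ∩ B) := by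
  simpa [compl_union] using (hA.compl.union hB.compl).compl

lemma sdiff (hA : AlmostInvariant A) (hB : AlmostInvariant B) : AlmostInvariant (A \ B) :=
  hA.inter hB.compl

lemma smul (hA : AlmostInvariant A) (g : G) : AlmostInvariant (g • A) :=
  almostInvariant_iff.2 fun h => by
    rw [smul_comm, ← smul_set_symmDiff]
    exact (almostInvariant_iff.1 hA h).smul_set

lemma infinite_inter_op_smul (hA : AlmostInvariant A) (hAB : (A ∩ B).Infinite)
    (g : G) : (A ∩ B <• g).Infinite := by
  have htranslate : (A <• g ∩ B <• g).Infinite := by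
    simpa [smul_set_inter] using (infinite_smul_set (a := op g)).2 hAB
  refine (htranslate.inter_of_finite_sdiff ?_).mono fun x hx => ⟨hx.2, hx.1.2⟩
  exact (hA.finite_op_smul_sdiff g).subset fun x hx => ⟨hx.1.1, hx.2⟩

lemma infinite_inter_subgroup (hA : AlmostInvariant A) (hinf : A.Infinite)
    (H : Subgroup G) [H.FiniteIndex] : (A ∩ H).Infinite := by
  obtain ⟨T, hT, -⟩ := H.exists_isComplement_right 1
  have hcover : A ⊆ ⋃ t ∈ T, (H : Set G) <• t := fun x _ => by
    obtain ⟨t, ht, -⟩ := Subgroup.isComplement_iff_existsUnique_mul_inv_mem.1 hT x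
    exact mem_iUnion₂.2 ⟨t, t.2, by simpa using ht⟩
  obtain ⟨t, -, ht⟩ := hinf.exists_infinite_inter_of_subset_biUnion hT.finite_right hcover
  simpa [smul_smul] using hA.infinite_inter_op_smul ht t⁻¹

end AlmostInvariant

lemma Subgroup.finiteIndex_of_eq_imp_inv_mul_mem {α : Type*} [Finite α] (H : Subgroup G)
    (f : G → α) (hf : ∀ a b, f a = f b → a⁻¹ * b ∈ H) : H.FiniteIndex := by
  have : Finite (G ⧸ H) := Finite.of_injective (fun q : G ⧸ H => f q.out) fun q q' h => by
    simpa using QuotientGroup.eq.2 (hf _ _ h)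
  exact Subgroup.finiteIndex_of_finite_quotient

def almostStabilizer (C : Set G) : Subgroup G where
  carrier := {g | ((g • C) ∆ C).Finite}
  one_mem' := by simp
  mul_mem' {a b} ha hb := by
    have hb' := hb.smul_set (a := a)
    rw [smul_set_symmDiff, ← mul_smul] at hb'
    exact (hb'.union ha).subset (symmDiff_triangle _ _ _)
  inv_mem' {g} hg := by
    have hg' := hg.smul_set (a := g⁻¹)
    rwa [smul_set_symmDiff, inv_smul_smul, symmDiff_comm] at hg'

lemma mem_almostStabilizer {C : Set G} {g : G} :
    g ∈ almostStabilizer C ↔ ((g • C) ∆ C).Finite := Iff.rfl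

lemma Subgroup.IsComplement.mul_inter_eq {H : Subgroup G} {T X : Set G}
    (hT : Subgroup.IsComplement H T) (hT1 : 1 ∈ T) (hXH : X ⊆ H) : X * T ∩ H = X := by
  ext y
  constructor
  · rintro ⟨⟨x, hx, t, ht, rfl⟩, hy⟩
    have htH : t ∈ H := by simpa using H.mul_mem (H.inv_mem (hXH hx)) hy
    have ht1 : t = 1 := congrArg Subtype.val
      ((hT.equiv_snd_eq_self_of_mem_of_one_mem H.one_mem ht).symm.trans
        (hT.equiv_snd_eq_one_of_mem_of_one_mem hT1 htH))
    simpa [ht1] using hx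
  · exact fun hy => ⟨⟨y, hy, 1, hT1, mul_one y⟩, hXH hy⟩

lemma Subgroup.IsComplement.almostInvariant_mul {H : Subgroup G} [H.FiniteIndex] {T X : Set G}
    (hT : Subgroup.IsComplement H T) (hX : ∀ h ∈ H, (X <• h \ X).Finite) :
    AlmostInvariant (X * T) := by
  set r : G → G := fun g => hT.toRightFun g
  have hr : ∀ g, g * (r g)⁻¹ ∈ H := hT.mul_inv_toRightFun_mem
  -- `X * t * g = X * h * r (t * g)` with `h := t * g * (r (t * g))⁻¹ ∈ H`
  have hgrow : ∀ g, ((X * T) <• g \ (X * T)).Finite := fun g => by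
    refine (hT.finite_right.biUnion fun t _ =>
      (hX _ (hr (t * g))).smul_set (a := op (r (t * g)))).subset ?_
    rintro y ⟨hy, hyXT⟩
    obtain ⟨x, hx, t, ht, hxt⟩ := mem_op_smul_set_iff.1 hy
    obtain rfl : y = x * t * g := by simp [show x * t = y * g⁻¹ from hxt]
    refine mem_iUnion₂.2 ⟨t, ht, mem_op_smul_set_iff.2 ⟨?_, fun hX' =>
      hyXT ⟨_, hX', r (t * g), (hT.toRightFun (t * g)).2, inv_mul_cancel_right _ _⟩⟩⟩
    rw [mem_op_smul_set_iff]
    convert hx using 1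
    group
  refine almostInvariant_iff.2 fun g => (((hgrow g⁻¹).smul_set (a := op g)).union
    (hgrow g)).subset ?_
  rw [Set.symmDiff_def, smul_set_sdiff, smul_smul]
  simp

lemma exists_almostInvariant_inter_eq {H : Subgroup G} [H.FiniteIndex] {X : Set G}
    (hXH : X ⊆ H) (hX : ∀ h ∈ H, (X <• h \ X).Finite) :
    ∃ L : Set G, AlmostInvariant L ∧ L ∩ H = X := by
  obtain ⟨T, hT, hT1⟩ := H.exists_isComplement_right 1
  exact ⟨X * T, hT.almostInvariant_mul hX, hT.mul_inter_eq hT1 hXH⟩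

section Depth

variable (L : ℕ → Subgroup G) (C : Set G)

/-- The least `m` such that `c * L m ⊄ C` (junk value `0` if there is none). -/
noncomputable def depth (c : G) : ℕ := sInf {m | ∃ s ∈ L m, c * s ∉ C}

variable {L C}

lemma mul_mem_of_lt_depth {c s : G} {m : ℕ} (hm : m < depth L C c) (hs : s ∈ L m) :
    c * s ∈ C := by
  by_contra h
  exact Nat.notMem_of_lt_sInf hm ⟨s, hs, h⟩

lemma depth_mul (hL : Monotone L) {c h : G} {m : ℕ} (hh : h ∈ L m) (hm : m < depth L C c) :
    depth L C (c * h) = depth L C c := by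
  unfold depth
  congr 1
  ext n
  constructor
  · rintro ⟨s, hs, hcs⟩
    rw [mul_assoc] at hcs
    refine ⟨h * s, ?_, hcs⟩
    rcases le_total n m with hnm | hmn
    · exact absurd (mul_mem_of_lt_depth hm ((L m).mul_mem hh (hL hnm hs))) hcs
    · exact (L n).mul_mem (hL hmn hh) hs
  · rintro ⟨s, hs, hcs⟩
    refine ⟨h⁻¹ * s, ?_, by simpa [mul_assoc] using hcs⟩
    rcases le_total n m with hnm | hmn
    · exact absurd (mul_mem_of_lt_depth hm (hL hnm hs)) hcs
    · exact (L n).mul_mem ((L n).inv_mem (hL hmn hh)) hs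

lemma finite_setOf_depth_le (hL : Monotone L) (hfin : ∀ m, (L m : Set G).Finite)
    (hbd : ∀ m, ∀ s ∈ L m, (C \ C <• s⁻¹).Finite) (hex : ∀ c ∈ C, ∃ m, ∃ s ∈ L m, c * s ∉ C)
    (m : ℕ) : {c ∈ C | depth L C c ≤ m}.Finite := by
  refine ((hfin m).biUnion fun s hs => hbd m s hs).subset ?_
  rintro c ⟨hc, hcm⟩
  obtain ⟨s, hs, hcs⟩ := Nat.sInf_mem (hex c hc)
  exact mem_iUnion₂.2 ⟨s, hL hcm hs, hc, by rwa [mem_op_smul_set_iff, inv_inv]⟩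

lemma exists_infinite_split_of_depth (hL : Monotone L) (hfin : ∀ m, (L m : Set G).Finite)
    (hbd : ∀ m, ∀ s ∈ L m, (C \ C <• s⁻¹).Finite) (hex : ∀ c ∈ C, ∃ m, ∃ s ∈ L m, c * s ∉ C)
    (hC : C.Infinite) :
    ∃ X ⊆ C, X.Infinite ∧ (C \ X).Infinite ∧ ∀ m, ∀ h ∈ L m, (X <• h \ X).Finite := by
  have hle := finite_setOf_depth_le hL hfin hbd hex
  have hD : (depth L C '' C).Infinite := fun hfin => by
    obtain ⟨M, hM⟩ := hfin.bddAbove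
    exact hC ((hle M).subset fun c hc => ⟨hc, hM (mem_image_of_mem _ hc)⟩)
  obtain ⟨D, hDsub, hDinf, hDc⟩ := hD.exists_infinite_subset_infinite_sdiff
  refine ⟨C ∩ depth L C ⁻¹' D, inter_subset_left, ?_, ?_, fun m h hh => ?_⟩
  · refine Infinite.of_image (depth L C) (hDinf.mono fun d hd => ?_)
    obtain ⟨c, hc, rfl⟩ := hDsub hd
    exact ⟨c, ⟨hc, hd⟩, rfl⟩
  · refine Infinite.of_image (depth L C) (hDc.mono ?_)
    rintro _ ⟨⟨c, hc, rfl⟩, hdD⟩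
    exact ⟨c, ⟨hc, fun hcD => hdD hcD.2⟩, rfl⟩
  · refine ((hle m).smul_set (a := op h)).subset ?_
    rintro y ⟨hy, hyX⟩
    obtain ⟨hyC, hyD⟩ := mem_op_smul_set_iff.1 hy
    refine mem_op_smul_set_iff.2 ⟨hyC, not_lt.1 fun hmy => hyX ?_⟩
    have hdepth := depth_mul hL hh hmy
    rw [inv_mul_cancel_right] at hdepth
    exact ⟨by simpa using mul_mem_of_lt_depth hmy hh, by rwa [mem_preimage, hdepth]⟩

end Depth

lemma Subgroup.exists_monotone_finite_exhaustion [Countable G] (H : Subgroup G)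
    (hH : ∀ T : Set G, T.Finite → T ⊆ H → (Subgroup.closure T : Set G).Finite) :
    ∃ L : ℕ → Subgroup G, Monotone L ∧ (∀ m, (L m : Set G).Finite) ∧ (∀ m, L m ≤ H) ∧
      ∀ h ∈ H, ∃ m, h ∈ L m := by
  obtain ⟨e, he⟩ := exists_surjective_nat H
  have hsub : ∀ m, (fun i => (e i : G)) '' Iio m ⊆ H := by
    rintro m _ ⟨i, -, rfl⟩
    exact (e i).2
  refine ⟨fun m => Subgroup.closure ((fun i => (e i : G)) '' Iio m),
    fun m n hmn => Subgroup.closure_mono (image_mono (Iio_subset_Iio hmn)),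
    fun m => hH _ ((finite_Iio m).image _) (hsub m),
    fun m => (Subgroup.closure_le H).2 (hsub m), fun h hh => ?_⟩
  obtain ⟨i, hi⟩ := he ⟨h, hh⟩
  exact ⟨i + 1, Subgroup.subset_closure ⟨i, Nat.lt_succ_self i, by simp [hi]⟩⟩

lemma exists_mul_mem_boundary {T C : Set G} {w c : G} (hw : w ∈ Subgroup.closure T) (hc : c ∈ C)
    (hwc : w * c ∉ C) : ∃ y ∈ Subgroup.closure T, y * c ∈ ⋃ t ∈ T, (C \ t⁻¹ • C) ∪ (C \ t • C) := by
  induction hw using Subgroup.closure_induction_left with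
  | one => exact absurd (by simpa using hc) hwc
  | mul_left t ht y hy ih =>
    by_cases hyc : y * c ∈ C
    · refine ⟨y, hy, mem_iUnion₂.2 ⟨t, ht, Or.inl ⟨hyc, ?_⟩⟩⟩
      simpa [mem_smul_set_iff_inv_smul_mem, mul_assoc] using hwc
    · exact ih hyc
  | inv_mul_cancel t ht y hy ih =>
    by_cases hyc : y * c ∈ C
    · refine ⟨y, hy, mem_iUnion₂.2 ⟨t, ht, Or.inr ⟨hyc, ?_⟩⟩⟩
      simpa [mem_smul_set_iff_inv_smul_mem, mul_assoc] using hwc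
    · exact ih hyc

lemma Group.fg_of_forall_exists_mul_notMem {T C : Set G} (hT : T.Finite)
    (hTC : T ⊆ almostStabilizer C) (hC : AlmostInvariant C) (hCinf : C.Infinite)
    (hleave : ∀ x, ∃ w ∈ Subgroup.closure T, w * x ∉ C) : Group.FG G := by
  set Bd := ⋃ t ∈ T, (C \ t⁻¹ • C) ∪ (C \ t • C)
  have hBd : Bd.Finite := hT.biUnion fun t ht =>
    (((almostStabilizer C).inv_mem (hTC ht)).subset subset_union_right).union
      ((hTC ht).subset subset_union_right)
  have hcover : C ⊆ ⋃ p ∈ Bd, ((Subgroup.closure T : Subgroup G) : Set G) <• p := fun c hc => by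
    obtain ⟨w, hw, hwc⟩ := hleave c
    obtain ⟨y, hy, hyc⟩ := exists_mul_mem_boundary hw hc hwc
    exact mem_iUnion₂.2 ⟨y * c, hyc, mem_op_smul_set_iff.2 (by simpa using hy)⟩
  -- one coset `K p` meets `C` infinitely, hence so does every right coset `K z`
  obtain ⟨p, -, hp⟩ := hCinf.exists_infinite_inter_of_subset_biUnion hBd hcover
  refine Group.fg_iff.2 ⟨T ∪ Bd, (Subgroup.eq_top_iff' _).2 fun z => ?_, hT.union hBd⟩
  obtain ⟨y, hyC, hyz⟩ := (hC.infinite_inter_op_smul hp (p⁻¹ * z)).nonempty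
  obtain ⟨q, hq, hyq⟩ := mem_iUnion₂.1 (hcover hyC)
  rw [smul_smul, ← op_mul, mul_inv_cancel_left] at hyz
  have hzq : z * q⁻¹ ∈ Subgroup.closure T := by
    rw [show z * q⁻¹ = (y * z⁻¹)⁻¹ * (y * q⁻¹) by group]
    exact mul_mem (inv_mem (mem_op_smul_set_iff.1 hyz)) (mem_op_smul_set_iff.1 hyq)
  simpa using (Subgroup.closure (T ∪ Bd)).mul_mem (Subgroup.closure_mono subset_union_left hzq)
    (Subgroup.subset_closure (subset_union_right hq))

namespace Cayley

variable (S : Set G)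

/-- Paths `x = a₀, …, aₙ = y` in `W` with `aᵢ₊₁ ∈ aᵢ * S`; the empty path joins `x` to itself
even when `x ∉ W`. -/
def Reach (W : Set G) : G → G → Prop :=
  Relation.ReflTransGen fun a b => a ∈ W ∧ b ∈ W ∧ a⁻¹ * b ∈ S

def component (W : Set G) (x : G) : Set G := {y | Reach S W x y}

variable {S} {W W' F : Set G} {x y z : G}

lemma Reach.mono (hW : W ⊆ W') (h : Reach S W x y) : Reach S W' x y :=
  Relation.ReflTransGen.mono (fun _ _ hab => ⟨hW hab.1, hW hab.2.1, hab.2.2⟩) _ _ h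

lemma Reach.trans (hxy : Reach S W x y) (hyz : Reach S W y z) : Reach S W x z :=
  Relation.ReflTransGen.trans hxy hyz

lemma Reach.symm (hS : ∀ s ∈ S, s⁻¹ ∈ S) (h : Reach S W x y) : Reach S W y x :=
  Relation.ReflTransGen.mono (fun _ _ hab => ⟨hab.2.1, hab.1, by simpa using hS _ hab.2.2⟩) _ _
    (Relation.reflTransGen_swap.2 h)

lemma Reach.smul (g : G) (h : Reach S W x y) : Reach S (g • W) (g * x) (g * y) :=
  Relation.ReflTransGen.lift (g * ·) (fun a b hab =>
    ⟨smul_mem_smul_set hab.1, smul_mem_smul_set hab.2.1, by simpa [mul_assoc] using hab.2.2⟩) _ _ h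

lemma reach_smul_iff (g : G) : Reach S (g • W) (g * x) (g * y) ↔ Reach S W x y :=
  ⟨fun h => by simpa [smul_smul] using h.smul g⁻¹, Reach.smul g⟩

lemma component_smul (g x : G) : component S (g • W) (g * x) = g • component S W x := by
  ext y
  rw [mem_smul_set_iff_inv_smul_mem, smul_eq_mul]
  change Reach S (g • W) (g * x) y ↔ Reach S W x (g⁻¹ * y)
  rw [← reach_smul_iff g (x := x) (y := g⁻¹ * y), mul_inv_cancel_left]

lemma Reach.reach_component (h : Reach S W x y) : Reach S (component S W x) x y := by
  induction h with
  | refl => exact .refl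
  | tail hxb hstep ih => exact ih.tail ⟨hxb, hxb.tail hstep, hstep.2.2⟩

lemma Reach.mem_of_forall_mul_mem {X : Set G} (hX : ∀ a ∈ W ∩ X, ∀ s ∈ S, a * s ∈ X)
    (h : Reach S W x y) (hx : x ∈ X) : y ∈ X := by
  induction h with
  | refl => exact hx
  | tail _ hstep ih => simpa using hX _ ⟨hstep.1, ih⟩ _ hstep.2.2

lemma reach_univ (hS : ∀ s ∈ S, s⁻¹ ∈ S) (hgen : Subgroup.closure S = ⊤) (x y : G) :
    Reach S univ x y := by
  suffices h : ∀ w ∈ Subgroup.closure S, Reach S univ x (x * w) by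
    simpa using h (x⁻¹ * y) (hgen ▸ Subgroup.mem_top _)
  intro w hw
  induction hw using Subgroup.closure_induction_right with
  | one =>
    rw [mul_one]
    exact Relation.ReflTransGen.refl
  | mul_right w _ s hs ih => exact ih.tail ⟨trivial, trivial, by simpa [mul_assoc] using hs⟩
  | mul_inv_cancel w _ s hs ih =>
    exact ih.tail ⟨trivial, trivial, by simpa [mul_assoc] using hS s hs⟩

lemma Reach.exists_mul_mem (h : Reach S univ x z) (hx : x ∉ F) (hz : z ∈ F) :
    ∃ y, Reach S Fᶜ x y ∧ ∃ s ∈ S, y * s ∈ F := by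
  induction h using Relation.ReflTransGen.head_induction_on with
  | refl => exact absurd hz hx
  | @head a b hab _ ih =>
    by_cases hb : b ∈ F
    · exact ⟨a, .refl, a⁻¹ * b, hab.2.2, by simpa using hb⟩
    · obtain ⟨y, hy, hyF⟩ := ih hb
      exact ⟨y, .head ⟨hx, hb, hab.2.2⟩ hy, hyF⟩

lemma Reach.exists_finite (h : Reach S univ x y) :
    ∃ W : Set G, W.Finite ∧ y ∈ W ∧ ∀ p ∈ W, Reach S W x p := by
  induction h with
  | refl => exact ⟨{x}, finite_singleton x, rfl, fun p hp => hp ▸ .refl⟩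
  | @tail b c _ hstep ih =>
    obtain ⟨W, hW, hbW, hxW⟩ := ih
    refine ⟨insert c W, hW.insert c, mem_insert c W, ?_⟩
    rintro p (rfl | hp)
    · exact ((hxW b hbW).mono (subset_insert _ _)).tail
        ⟨mem_insert_of_mem _ hbW, mem_insert _ W, hstep.2.2⟩
    · exact (hxW p hp).mono (subset_insert _ _)

lemma exists_finite_connected_superset (hS : ∀ s ∈ S, s⁻¹ ∈ S)
    (hgen : Subgroup.closure S = ⊤) {F₀ : Set G} (hF₀ : F₀.Finite) :
    ∃ F : Set G, F₀ ⊆ F ∧ F.Finite ∧ (1 : G) ∈ F ∧ ∀ f ∈ F, Reach S F 1 f := by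
  choose W hW hfW hW1 using fun f => (reach_univ hS hgen 1 f).exists_finite
  refine ⟨⋃ f ∈ insert 1 F₀, W f, fun f hf => mem_biUnion (mem_insert_of_mem _ hf) (hfW f),
    (hF₀.insert 1).biUnion fun f _ => hW f, mem_biUnion (mem_insert 1 F₀) (hfW 1),
    fun f hf => ?_⟩
  obtain ⟨f', hf', hff'⟩ := mem_iUnion₂.1 hf
  exact (hW1 f' f hff').mono (subset_biUnion_of_mem hf')

lemma smul_subset_component (hF : ∀ f ∈ F, Reach S F 1 f) {a u : G}
    (hu : u ∈ component S Fᶜ a) (huF : ∀ p ∈ F, u * p ∉ F) : u • F ⊆ component S Fᶜ a := by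
  rintro _ ⟨p, hp, rfl⟩
  have hup := ((hF p hp).smul u).mono (W' := Fᶜ) (by rintro _ ⟨q, hq, rfl⟩; exact huF q hq)
  rw [mul_one] at hup
  exact Reach.trans hu hup

lemma component_subset_smul_component (hS : ∀ s ∈ S, s⁻¹ ∈ S)
    (hgen : Subgroup.closure S = ⊤) (hF1 : (1 : G) ∈ F) (hF : ∀ f ∈ F, Reach S F 1 f)
    {a u : G} (ha : a ∉ F) (huF : ∀ p ∈ F, u * p ∉ F)
    (hdisj : Disjoint (component S Fᶜ a) (u • F)) :
    component S Fᶜ a ⊆ u • component S Fᶜ u⁻¹ := by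
  rw [← component_smul, mul_inv_cancel, smul_set_compl]
  have hFW : F ⊆ (u • F)ᶜ := by
    rintro p hp ⟨q, hq, rfl⟩
    exact huF q hq hp
  have hcW : component S Fᶜ a ⊆ (u • F)ᶜ := fun z hz => disjoint_left.1 hdisj hz
  obtain ⟨y, hay, s, hs, hys⟩ := (reach_univ hS hgen a 1).exists_mul_mem ha hF1
  have h1y : Reach S (u • F)ᶜ 1 y := ((hF _ hys).mono hFW).tail
    ⟨hFW hys, hcW hay, by simpa using hS s hs⟩
  have h1a : Reach S (u • F)ᶜ 1 a := h1y.trans ((hay.reach_component.mono hcW).symm hS)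
  exact fun z hz => h1a.trans ((Reach.reach_component hz).mono hcW)

end Cayley

open Cayley in
structure IsSeparatingSet {k : ℕ} (S : Set G) (A : Fin k → Set G) (F : Set G) : Prop where
  finite : F.Finite
  one_mem : (1 : G) ∈ F
  reach : ∀ f ∈ F, Reach S F 1 f
  exists_mem : ∀ x ∉ F, ∃ i, x ∈ A i
  mul_mem : ∀ i, ∀ x ∈ Fᶜ ∩ A i, ∀ s ∈ S, x * s ∈ A i

namespace IsSeparatingSet

open Cayley

variable {k : ℕ} {A : Fin k → Set G} {S F : Set G}

lemma component_subset (hF : IsSeparatingSet S A F) {a : G} {i : Fin k} (hai : a ∈ A i) :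
    component S Fᶜ a ⊆ A i :=
  fun _ hz => Reach.mem_of_forall_mul_mem (hF.mul_mem i) hz hai

lemma exists_infinite_component (hF : IsSeparatingSet S A F) (hS : S.Finite)
    (hSsymm : ∀ s ∈ S, s⁻¹ ∈ S) (hgen : Subgroup.closure S = ⊤) {i : Fin k}
    (hAi : (A i).Infinite) :
    ∃ a ∉ F, (component S Fᶜ a).Infinite ∧ component S Fᶜ a ⊆ A i := by
  have hcover : A i \ F ⊆ ⋃ y ∈ ⋃ s ∈ S, F <• s⁻¹, component S Fᶜ y := by
    rintro x ⟨-, hx⟩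
    obtain ⟨y, hxy, s, hs, hys⟩ := (reach_univ hSsymm hgen x 1).exists_mul_mem hx hF.one_mem
    exact mem_biUnion (mem_biUnion hs (mem_op_smul_set_iff.2 (by rwa [inv_inv]))) (hxy.symm hSsymm)
  obtain ⟨y, -, hy⟩ := (hAi.sdiff hF.finite).exists_infinite_inter_of_subset_biUnion
    (hS.biUnion fun s _ => hF.finite.smul_set) hcover
  obtain ⟨a, ⟨haA, haF⟩, hya⟩ := hy.nonempty
  refine ⟨a, haF, hy.mono fun z hz => Reach.trans (Reach.symm hSsymm hya) hz.2,
    hF.component_subset haA⟩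

end IsSeparatingSet

structure IsEndFamily {k : ℕ} (A : Fin k → Set G) : Prop where
  infinite : ∀ i, (A i).Infinite
  almostInvariant : ∀ i, AlmostInvariant (A i)
  pairwise_disjoint : Pairwise (Function.onFun Disjoint A)

structure IsMaximalEndFamily {k : ℕ} (A : Fin k → Set G) : Prop extends IsEndFamily A where
  not_exists_succ : ¬∃ B : Fin (k + 1) → Set G, IsEndFamily B

namespace IsEndFamily

variable {k : ℕ} {A : Fin k → Set G}

lemma comp_injective (hA : IsEndFamily A) {m : ℕ} {f : Fin m → Fin k}
    (hf : Function.Injective f) : IsEndFamily (A ∘ f) :=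
  ⟨fun i => hA.infinite (f i), fun i => hA.almostInvariant (f i),
    fun _ _ hij => hA.pairwise_disjoint (hf.ne hij)⟩

lemma eq_of_mem (hA : IsEndFamily A) {i j : Fin k} {x : G} (hi : x ∈ A i) (hj : x ∈ A j) :
    i = j := by
  by_contra hij
  exact disjoint_left.1 (hA.pairwise_disjoint hij) hi hj

lemma eq_of_subset_of_finite_sdiff (hA : IsEndFamily A) {U : Set G} (hU : U.Infinite)
    {i j : Fin k} (hUi : U ⊆ A i) (hUj : (U \ A j).Finite) : i = j := by
  obtain ⟨x, hxU, hxj⟩ := (hU.inter_of_finite_sdiff hUj).nonempty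
  exact hA.eq_of_mem (hUi hxU) hxj

lemma cons (hA : IsEndFamily A) {X : Set G} (hXinf : X.Infinite) (hXai : AlmostInvariant X)
    (hX : ∀ i, Disjoint X (A i)) : IsEndFamily (Fin.cons X A : Fin (k + 1) → Set G) := by
  refine ⟨Fin.cases hXinf hA.infinite, Fin.cases hXai hA.almostInvariant, ?_⟩
  intro i j hij
  induction i using Fin.cases <;> induction j using Fin.cases <;>
    simp only [Function.onFun, Fin.cons_zero, Fin.cons_succ]
  · exact absurd rfl hij
  · exact hX _
  · exact (hX _).symm
  · exact hA.pairwise_disjoint fun h => hij (congrArg Fin.succ h)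

lemma update (hA : IsEndFamily A) (i : Fin k) {Y : Set G} (hY : Y ⊆ A i)
    (hYinf : Y.Infinite) (hYai : AlmostInvariant Y) : IsEndFamily (Function.update A i Y) := by
  have hsub : ∀ j, Function.update A i Y j ⊆ A j := fun j => by
    rcases eq_or_ne j i with rfl | hj
    · simpa using hY
    · simp [hj]
  refine ⟨fun j => ?_, fun j => ?_,
    fun j j' hjj' => (hA.pairwise_disjoint hjj').mono (hsub j) (hsub j')⟩ <;>
    rcases eq_or_ne j i with rfl | hj <;> simp [*, hA.infinite, hA.almostInvariant]

lemma exists_succ_of_split (hA : IsEndFamily A) (i : Fin k) {X : Set G}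
    (hX : AlmostInvariant X) (hin : (A i ∩ X).Infinite) (hout : (A i \ X).Infinite) :
    ∃ B : Fin (k + 1) → Set G, IsEndFamily B := by
  refine ⟨_, (hA.update i inter_subset_left hin ((hA.almostInvariant i).inter hX)).cons hout
    ((hA.almostInvariant i).sdiff hX) fun j => ?_⟩
  rcases eq_or_ne j i with rfl | hj
  · simpa using disjoint_sdiff_left.mono_right inter_subset_right
  · simpa [hj] using (hA.pairwise_disjoint hj).symm.mono_left sdiff_subset

lemma exists_isMaximalEndFamily (hA : IsEndFamily A) (d : ℕ)
    (hd : ¬∃ B : Fin (k + d) → Set G, IsEndFamily B) :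
    ∃ m, k ≤ m ∧ ∃ B : Fin m → Set G, IsMaximalEndFamily B := by
  induction d generalizing k with
  | zero => exact absurd ⟨A, hA⟩ hd
  | succ d ih =>
    by_cases hsucc : ∃ B : Fin (k + 1) → Set G, IsEndFamily B
    · obtain ⟨B, hB⟩ := hsucc
      obtain ⟨m, hm, C, hC⟩ := ih hB (by rwa [Nat.add_right_comm, Nat.add_assoc])
      exact ⟨m, by omega, C, hC⟩
    · exact ⟨k, le_rfl, A, hA, hsucc⟩

lemma fg_of_infinite_closure (hA : IsEndFamily A) {i₁ i₂ : Fin k} (h12 : i₁ ≠ i₂) {T : Set G}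
    (hT : T.Finite) (hTA : T ⊆ (⨅ i, almostStabilizer (A i) : Subgroup G))
    (hK : (Subgroup.closure T : Set G).Infinite) : Group.FG G := by
  have hcoset : ∀ i x, (∀ w ∈ Subgroup.closure T, w * x ∈ A i) →
      ((Subgroup.closure T : Set G) \ A i).Finite := fun i x hx =>
    (hA.almostInvariant i).finite_op_smul_sdiff x⁻¹ |>.subset fun w hw =>
      ⟨mem_op_smul_set_iff.2 (by simpa using hx w hw.1), hw.2⟩
  obtain ⟨i, hi⟩ : ∃ i, ∀ x, ∃ w ∈ Subgroup.closure T, w * x ∉ A i := by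
    by_contra! h
    obtain ⟨x₁, hx₁⟩ := h i₁
    obtain ⟨x₂, hx₂⟩ := h i₂
    refine hK (((hcoset i₁ x₁ hx₁).union (hcoset i₂ x₂ hx₂)).subset fun w hw => ?_)
    by_cases hw₁ : w ∈ A i₁
    · exact Or.inr ⟨hw, disjoint_left.1 (hA.pairwise_disjoint h12) hw₁⟩
    · exact Or.inl ⟨hw, hw₁⟩
  exact Group.fg_of_forall_exists_mul_notMem hT
    (hTA.trans (SetLike.coe_subset_coe.2 (iInf_le _ i))) (hA.almostInvariant i) (hA.infinite i) hi

end IsEndFamily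

namespace IsMaximalEndFamily

open Cayley

variable {k : ℕ} {A : Fin k → Set G}

lemma finite_sdiff_of_infinite_inter (hA : IsMaximalEndFamily A) {X : Set G}
    (hX : AlmostInvariant X) {i : Fin k} (hin : (A i ∩ X).Infinite) : (A i \ X).Finite :=
  not_infinite.1 fun hout => hA.not_exists_succ (hA.exists_succ_of_split i hX hin hout)

lemma finite_compl_iUnion (hA : IsMaximalEndFamily A) : (⋃ i, A i)ᶜ.Finite :=
  not_infinite.1 fun h => hA.not_exists_succ ⟨_, hA.cons h (AlmostInvariant.iUnion
    hA.almostInvariant).compl fun i => disjoint_compl_left.mono_right (subset_iUnion A i)⟩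

lemma exists_infinite_inter (hA : IsMaximalEndFamily A) {X : Set G} (hX : X.Infinite) :
    ∃ j, (A j ∩ X).Infinite := by
  by_contra! h
  refine hX (((finite_iUnion h).union hA.finite_compl_iUnion).subset fun x hx => ?_)
  by_cases hxA : x ∈ ⋃ i, A i
  · obtain ⟨i, hi⟩ := mem_iUnion.1 hxA
    exact Or.inl (mem_iUnion.2 ⟨i, hi, hx⟩)
  · exact Or.inr hxA

lemma exists_finite_symmDiff_smul (hA : IsMaximalEndFamily A) (g : G) (i : Fin k) :
    ∃ j, ((g • A i) ∆ A j).Finite := by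
  obtain ⟨j, hj⟩ := hA.exists_infinite_inter
    ((infinite_smul_set (a := g)).2 (hA.infinite i))
  have hji : (A j \ g • A i).Finite :=
    hA.finite_sdiff_of_infinite_inter ((hA.almostInvariant i).smul g) hj
  have hij : (A i \ g⁻¹ • A j).Finite := by
    refine hA.finite_sdiff_of_infinite_inter ((hA.almostInvariant j).smul g⁻¹) ?_
    simpa [smul_set_inter, inter_comm] using (infinite_smul_set (a := g⁻¹)).2 hj
  refine ⟨j, Finite.union ?_ hji⟩
  simpa [smul_set_sdiff] using hij.smul_set (a := g)

lemma finiteIndex_almostStabilizer (hA : IsMaximalEndFamily A) (i : Fin k) :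
    (almostStabilizer (A i)).FiniteIndex := by
  choose σ hσ using fun g => hA.exists_finite_symmDiff_smul g i
  refine Subgroup.finiteIndex_of_eq_imp_inv_mul_mem _ σ fun a b hab => ?_
  have hb := hσ b
  rw [← hab] at hb
  have h := (hb.union (symmDiff_comm (a • A i) _ ▸ hσ a)).subset
    (symmDiff_triangle (b • A i) (A (σ a)) (a • A i))
  simpa [mem_almostStabilizer, smul_set_symmDiff, smul_smul] using h.smul_set (a := a⁻¹)

lemma false_of_locallyFinite [Countable G] (hA : IsMaximalEndFamily A) {i₀ i₁ : Fin k}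
    (h01 : i₀ ≠ i₁) (H : Subgroup G) [H.FiniteIndex]
    (hH : ∀ T : Set G, T.Finite → T ⊆ H → (Subgroup.closure T : Set G).Finite) : False := by
  obtain ⟨L, hLmono, hLfin, hLH, hLcov⟩ := H.exists_monotone_finite_exhaustion hH
  set C := A i₀ ∩ H
  have hbd : ∀ m, ∀ s ∈ L m, (C \ C <• s⁻¹).Finite := fun m s hs =>
    ((hA.almostInvariant i₀).finite_sdiff_op_smul s⁻¹).subset fun c ⟨⟨hc, hcH⟩, hcs⟩ =>
      ⟨hc, fun hcs' => hcs (mem_op_smul_set_iff.2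
        ⟨mem_op_smul_set_iff.1 hcs', by simpa using H.mul_mem hcH (hLH m hs)⟩)⟩
  have hex : ∀ c ∈ C, ∃ m, ∃ s ∈ L m, c * s ∉ C := fun c ⟨_, hcH⟩ => by
    obtain ⟨x, hx, hxH⟩ :=
      ((hA.almostInvariant i₁).infinite_inter_subgroup (hA.infinite i₁) H).nonempty
    obtain ⟨m, hm⟩ := hLcov _ (H.mul_mem (H.inv_mem hcH) hxH)
    refine ⟨m, _, hm, fun hxC => ?_⟩
    rw [mul_inv_cancel_left] at hxC
    exact h01 (hA.eq_of_mem hxC.1 hx)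
  obtain ⟨X, hXC, hXinf, hCX, hXai⟩ := exists_infinite_split_of_depth hLmono hLfin hbd hex
    ((hA.almostInvariant i₀).infinite_inter_subgroup (hA.infinite i₀) H)
  obtain ⟨Y, hYai, hYH⟩ := exists_almostInvariant_inter_eq (fun x hx => (hXC hx).2)
    fun h hh => by obtain ⟨m, hm⟩ := hLcov h hh; exact hXai m h hm
  refine hA.not_exists_succ (hA.exists_succ_of_split i₀ hYai ?_ ?_)
  · exact hXinf.mono fun x hx => ⟨(hXC hx).1, (hYH.symm ▸ hx : x ∈ Y ∩ H).1⟩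
  · refine hCX.mono ?_
    rintro c ⟨⟨hc, hcH⟩, hcX⟩
    exact ⟨hc, fun hcY => hcX (hYH ▸ ⟨hcY, hcH⟩)⟩

lemma exists_isSeparatingSet (hA : IsMaximalEndFamily A) {S : Set G} (hS : S.Finite)
    (hSsymm : ∀ s ∈ S, s⁻¹ ∈ S) (hgen : Subgroup.closure S = ⊤) :
    ∃ F, IsSeparatingSet S A F := by
  obtain ⟨F, hF₀F, hF, hF1, hFreach⟩ := exists_finite_connected_superset hSsymm hgen
    (hA.finite_compl_iUnion.union (finite_iUnion fun i => hS.biUnion fun s _ =>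
      (hA.almostInvariant i).finite_sdiff_op_smul s⁻¹))
  refine ⟨F, hF, hF1, hFreach, fun x hx => ?_, fun i x ⟨hxF, hxi⟩ s hs => ?_⟩
  · by_contra! h
    exact hx (hF₀F (Or.inl fun hx' => by simp [h] at hx'))
  · by_contra hxs
    refine hxF (hF₀F (Or.inr (mem_iUnion.2 ⟨i, mem_biUnion hs ⟨hxi, ?_⟩⟩)))
    rwa [mem_op_smul_set_iff, inv_inv]

lemma false_of_fg (hA : IsMaximalEndFamily A) {i₀ i₁ i₂ : Fin k} (h01 : i₀ ≠ i₁)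
    (h02 : i₀ ≠ i₂) (h12 : i₁ ≠ i₂) (hfg : Group.FG G) : False := by
  obtain ⟨S₀, hgen₀, hS₀⟩ := Group.fg_iff.1 hfg
  have hSsymm : ∀ s ∈ S₀ ∪ S₀⁻¹, s⁻¹ ∈ S₀ ∪ S₀⁻¹ := by
    rintro s (hs | hs)
    · exact Or.inr (inv_mem_inv.2 hs)
    · exact Or.inl (mem_inv.1 hs)
  have hgen : Subgroup.closure (S₀ ∪ S₀⁻¹) = ⊤ :=
    eq_top_mono (Subgroup.closure_mono subset_union_left) hgen₀
  obtain ⟨F, hF⟩ := hA.exists_isSeparatingSet (hS₀.union hS₀.inv) hSsymm hgen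
  choose a haF hUinf hUA using fun i =>
    hF.exists_infinite_component (hS₀.union hS₀.inv) hSsymm hgen (hA.infinite i)
  -- a point `u` of an infinite component in `A i₀` with `u • F` disjoint from `F`
  obtain ⟨u, hu, huFF⟩ := (hUinf i₀).exists_notMem_finite (hF.finite.mul hF.finite.inv)
  have huF : ∀ p ∈ F, u * p ∉ F := fun p hp hup =>
    huFF ⟨u * p, hup, p⁻¹, by simpa using hp, by simp⟩
  have hu₀ : u • F ⊆ A i₀ := (smul_subset_component hF.reach hu huF).trans (hUA i₀)
  have hu' : u⁻¹ ∉ F := fun h => huF _ h (by simpa using hF.one_mem)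
  obtain ⟨c, hc⟩ := hF.exists_mem _ hu'
  obtain ⟨c', hc'⟩ := hA.exists_finite_symmDiff_smul u c
  -- an infinite component in `A j`, `j ≠ i₀`, avoids `u • F ⊆ A i₀`, so it lies in `u • A c`
  have key : ∀ j ≠ i₀, j = c' := fun j hj => by
    refine hA.eq_of_subset_of_finite_sdiff (hUinf j) (hUA j) ?_
    have hsub := component_subset_smul_component hSsymm hgen hF.one_mem hF.reach (haF j) huF
      ((hA.pairwise_disjoint hj).mono (hUA j) hu₀)
    exact (hc'.subset subset_union_left).subset fun z hz =>
      ⟨smul_set_mono (hF.component_subset hc) (hsub hz.1), hz.2⟩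
  exact h12 ((key i₁ h01.symm).trans (key i₂ h02.symm).symm)

lemma false_of_three_le [Countable G] (hA : IsMaximalEndFamily A) (hk : 3 ≤ k) : False := by
  have h01 : (⟨0, by omega⟩ : Fin k) ≠ ⟨1, by omega⟩ := by simp [Fin.ext_iff]
  have h02 : (⟨0, by omega⟩ : Fin k) ≠ ⟨2, by omega⟩ := by simp [Fin.ext_iff]
  have h12 : (⟨1, by omega⟩ : Fin k) ≠ ⟨2, by omega⟩ := by simp [Fin.ext_iff]
  by_cases hfg : Group.FG G
  · exact hA.false_of_fg h01 h02 h12 hfg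
  have := Subgroup.finiteIndex_iInf hA.finiteIndex_almostStabilizer
  refine hA.false_of_locallyFinite h01 (⨅ i, almostStabilizer (A i)) fun T hT hTH => ?_
  by_contra hK
  exact hfg (hA.fg_of_infinite_closure h01 hT hTH hK)

end IsMaximalEndFamily

end

/-- Theorem 5.10: if a countable group contains three pairwise disjoint infinite almost
invariant subsets, then it contains `n` of them for every `n` (the number of ends is
either infinite or at most 2). -/
theorem ends_infinite_or_le_two
    {G : Type*} [Group G] [Countable G]
    (h3 : ∃ A : Fin 3 → Set G, (∀ i, (A i).Infinite ∧ AlmostInvariant (A i)) ∧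
      Pairwise (Function.onFun Disjoint A))
    (n : ℕ) :
    ∃ A : Fin n → Set G, (∀ i, (A i).Infinite ∧ AlmostInvariant (A i)) ∧
      Pairwise (Function.onFun Disjoint A) := by
  obtain ⟨A, hAai, hAdisj⟩ := h3
  have hA : IsEndFamily A := ⟨fun i => (hAai i).1, fun i => (hAai i).2, hAdisj⟩
  by_contra hn
  have hn' : ¬∃ B : Fin n → Set G, IsEndFamily B := fun ⟨B, hB⟩ =>
    hn ⟨B, fun i => ⟨hB.infinite i, hB.almostInvariant i⟩, hB.pairwise_disjoint⟩
  rcases le_or_gt n 3 with hn3 | hn3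
  · exact hn' ⟨_, hA.comp_injective (Fin.castLE_injective hn3)⟩
  · obtain ⟨k, hk, B, hB⟩ :=
      hA.exists_isMaximalEndFamily (n - 3) (by rwa [Nat.add_sub_cancel' hn3.le])
    exact hB.false_of_three_le hk
end

section
/- Any countable additive subgroup G of the real numbers that is not finitely generated has exactly one end; that is, every almost invariant subset of G is either finite or has finite complement in G. In particular, the group of rational numbers has one end. -/
open Set

/-- A subset `A` of an additive group `G` is almost invariant if `A Δ (A + g)` is finite
for every `g : G`. -/
def AlmostInvariantAdd {G : Type*} [AddGroup G] (A : Set G) : Prop :=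
  ∀ g : G, (symmDiff A ((fun a => a + g) '' A)).Finite

/-!
Work with any homomorphism `φ : G →+ ℝ` of dense range and fix `g` with `φ g > 0`. Only finitely
many `x` have `x ∈ A` and `x + g ∈ A` disagreeing, so far out (in the `φ`-direction) `A` is
`g`-periodic. For `a, b` far out, the shift by `b - a` carries `a + n • g` to `b + n • g`, and
for large `n` it preserves `A`; so `A` eventually contains everything or nothing, at `+∞` and
likewise at `-∞`. If the two ends agree, `A` or `Aᶜ` is bounded, hence finite, being disjoint from
a far translate of itself. If they disagree, every orbit `x + ℕ • g` with `φ x` in a fixed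
interval of length `φ g` far to the left crosses from one side of `A` to the other; these orbits
are pairwise disjoint and, by density, infinitely many, which is absurd.
-/

open Filter Topology in
theorem Dense.infinite_inter_of_isOpen {X : Type*} [TopologicalSpace X] [T1Space X]
    [∀ x : X, NeBot (𝓝[≠] x)] {s U : Set X} (hs : Dense s) (hU : IsOpen U)
    (hne : U.Nonempty) : (s ∩ U).Infinite := fun hfin ↦
  let ⟨_, hxU, hxs, hx⟩ := (hs.sdiff_finite hfin).inter_open_nonempty U hU hne
  hx ⟨hxs, hxU⟩

theorem mem_iff_add_nsmul_mem {G : Type*} [AddMonoid G] {A : Set G} {x g : G}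
    (h : ∀ k : ℕ, x + k • g ∈ A ↔ x + k • g + g ∈ A) (n : ℕ) : x ∈ A ↔ x + n • g ∈ A := by
  induction n with
  | zero => simp
  | succ n ih => rw [ih, h n, succ_nsmul, add_assoc]

namespace AddMonoidHom

variable {G : Type*} [AddGroup G] (φ : G →+ ℝ)

theorem exists_pos_of_denseRange (hφ : DenseRange φ) : ∃ g, 0 < φ g := by
  obtain ⟨_, hpos, g, rfl⟩ := hφ.inter_open_nonempty (Ioi 0) isOpen_Ioi nonempty_Ioi
  exact ⟨g, hpos⟩

theorem eq_of_add_nsmul_eq_add_nsmul {x y g : G} {m n : ℕ} (h : x + m • g = y + n • g)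
    (hxy : |φ x - φ y| < φ g) : x = y := by
  have hφ := congrArg φ h
  simp only [map_add, map_nsmul, nsmul_eq_mul] at hφ
  rw [abs_lt] at hxy
  have hmn : m < n + 1 := by exact_mod_cast (by nlinarith : (m : ℝ) < n + 1)
  have hnm : n < m + 1 := by exact_mod_cast (by nlinarith : (n : ℝ) < m + 1)
  obtain rfl : m = n := by omega
  exact add_right_cancel h

end AddMonoidHom

namespace AlmostInvariantAdd

section AddGroup

variable {G : Type*} [AddGroup G] {A : Set G}

theorem compl (hA : AlmostInvariantAdd A) : AlmostInvariantAdd Aᶜ := fun g ↦ by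
  rw [image_compl_eq (f := (· + g)) (Equiv.addRight g).bijective, compl_symmDiff_compl]
  exact hA g

theorem finite_setOf_not_mem_iff_add_mem (hA : AlmostInvariantAdd A) (g : G) :
    {x | ¬(x ∈ A ↔ x + g ∈ A)}.Finite := by
  refine ((hA g).preimage (add_left_injective g).injOn).subset fun x hx ↦ ?_
  simp only [mem_ofPred_eq, mem_preimage, mem_symmDiff, add_left_inj, exists_eq_right,
    mem_image] at hx ⊢
  tauto

variable (φ : G →+ ℝ)

theorem finite_of_subset_preimage_Icc (hA : AlmostInvariantAdd A) {g : G} (hg : 0 < φ g)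
    {a b : ℝ} (hAab : A ⊆ φ ⁻¹' Icc a b) : A.Finite := by
  obtain ⟨n, hn⟩ := exists_lt_nsmul hg (b - a)
  refine (hA (n • g)).subset fun x hx ↦ Or.inl ⟨hx, ?_⟩
  rintro ⟨y, hy, rfl⟩
  have := (hAab hx).2
  have := (hAab hy).1
  simp only [map_add, map_nsmul] at *
  linarith

theorem false_of_forall_mem_of_forall_notMem (hA : AlmostInvariantAdd A) (hφ : DenseRange φ)
    {R R' : ℝ} (hup : ∀ x, R < φ x → x ∈ A) (hlow : ∀ x, φ x < R' → x ∉ A) : False := by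
  obtain ⟨g, hg⟩ := φ.exists_pos_of_denseRange hφ
  set S := φ ⁻¹' Ioo (R' - φ g) R'
  set T := {x | ¬(x ∈ A ↔ x + g ∈ A)}
  have hS : S.Infinite := Infinite.preimage' <| by
    rw [inter_comm]
    exact hφ.infinite_inter_of_isOpen isOpen_Ioo (nonempty_Ioo.2 (by linarith))
  have := (hA.finite_setOf_not_mem_iff_add_mem g).to_subtype
  have cross : ∀ x : S, ∃ k : ℕ, (x : G) + k • g ∈ T := fun ⟨x, hx⟩ ↦ by
    by_contra! h
    obtain ⟨n, hn⟩ := exists_lt_nsmul hg (R - φ x)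
    refine hlow x hx.2 ((mem_iff_add_nsmul_mem (fun k ↦ not_not.1 (h k)) n).2 (hup _ ?_))
    simp only [map_add, map_nsmul]
    linarith
  choose k hk using cross
  have : Finite S := Finite.of_injective (fun x ↦ (⟨_, hk x⟩ : T)) fun x y hxy ↦
    Subtype.ext <| φ.eq_of_add_nsmul_eq_add_nsmul (congrArg Subtype.val hxy) <| by
      rw [abs_lt]
      constructor <;> linarith [x.2.1, x.2.2, y.2.1, y.2.2]
  exact hS (toFinite S)

end AddGroup

section AddCommGroup

variable {G : Type*} [AddCommGroup G] {A : Set G} (φ : G →+ ℝ)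

theorem exists_mem_iff_mem_of_lt (hA : AlmostInvariantAdd A) {g : G} (hg : 0 < φ g) :
    ∃ R, ∀ x y, R < φ x → R < φ y → (x ∈ A ↔ y ∈ A) := by
  obtain ⟨R, hR⟩ := ((hA.finite_setOf_not_mem_iff_add_mem g).image φ).bddAbove
  have periodic : ∀ x, R < φ x → ∀ n : ℕ, x ∈ A ↔ x + n • g ∈ A := fun x hx ↦
    mem_iff_add_nsmul_mem fun k ↦ not_not.1 fun hk ↦ (hR ⟨_, hk, rfl⟩).not_gt <| by
      simp only [map_add, map_nsmul]
      linarith [nsmul_nonneg hg.le k]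
  refine ⟨R, fun x y hx hy ↦ ?_⟩
  obtain ⟨R', hR'⟩ := ((hA.finite_setOf_not_mem_iff_add_mem (y - x)).image φ).bddAbove
  obtain ⟨n, hn⟩ := exists_lt_nsmul hg (R' - φ x)
  have hxn : x + n • g ∈ A ↔ x + n • g + (y - x) ∈ A := not_not.1 fun h ↦
    (hR' ⟨_, h, rfl⟩).not_gt <| by simp only [map_add, map_nsmul]; linarith
  rw [periodic x hx n, periodic y hy n, hxn, show x + n • g + (y - x) = y + n • g by abel]

theorem exists_forall_mem_or_forall_notMem (hA : AlmostInvariantAdd A) {g : G} (hg : 0 < φ g) :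
    ∃ R, (∀ x, R < φ x → x ∈ A) ∨ (∀ x, R < φ x → x ∉ A) := by
  obtain ⟨R, hR⟩ := hA.exists_mem_iff_mem_of_lt φ hg
  by_cases h : ∃ a ∈ A, R < φ a
  · obtain ⟨a, ha, haR⟩ := h
    exact ⟨R, Or.inl fun x hx ↦ (hR a x haR hx).1 ha⟩
  · exact ⟨R, Or.inr fun x hx hxA ↦ h ⟨x, hxA, hx⟩⟩

theorem finite_or_finite_compl (hA : AlmostInvariantAdd A) (hφ : DenseRange φ) :
    A.Finite ∨ Aᶜ.Finite := by
  obtain ⟨g, hg⟩ := φ.exists_pos_of_denseRange hφ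
  obtain ⟨R, hup | hup⟩ := hA.exists_forall_mem_or_forall_notMem φ hg <;>
  obtain ⟨R', hlow | hlow⟩ :=
    hA.exists_forall_mem_or_forall_notMem (-φ) (by simpa using hg : 0 < (-φ) (-g)) <;>
  simp only [AddMonoidHom.neg_apply, lt_neg] at hlow
  · exact .inr <| hA.compl.finite_of_subset_preimage_Icc φ hg fun x hx ↦
      ⟨not_lt.1 fun h ↦ hx (hlow x h), not_lt.1 fun h ↦ hx (hup x h)⟩
  · exact (hA.false_of_forall_mem_of_forall_notMem φ hφ hup hlow).elim
  · exact (hA.compl.false_of_forall_mem_of_forall_notMem φ hφ hup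
      fun x hx ↦ not_not_intro (hlow x hx)).elim
  · exact .inl <| hA.finite_of_subset_preimage_Icc φ hg fun x hx ↦
      ⟨not_lt.1 fun h ↦ hlow x h hx, not_lt.1 fun h ↦ hup x h hx⟩

end AddCommGroup

end AlmostInvariantAdd

/-- Corollary 5.13: any countable additive subgroup of `ℝ` that is not finitely generated
has exactly one end: every almost invariant subset is finite or has finite complement.
In particular, the group of rational numbers has one end. -/
theorem countable_subgroup_of_reals_one_end :
    (∀ G : AddSubgroup ℝ, Countable G → ¬ AddGroup.FG G →
      ∀ A : Set G, AlmostInvariantAdd A → A.Finite ∨ Aᶜ.Finite) ∧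
    (∀ A : Set ℚ, AlmostInvariantAdd A → A.Finite ∨ Aᶜ.Finite) := by
  refine ⟨fun G _ hG A hA ↦ hA.finite_or_finite_compl G.subtype ?_,
    fun A hA ↦ hA.finite_or_finite_compl (Rat.castHom ℝ : ℚ →+ ℝ) Rat.denseRange_cast⟩
  rcases G.dense_or_cyclic with hd | ⟨a, rfl⟩
  · simpa [DenseRange] using hd
  · exact (hG ((AddGroup.fg_iff_addSubgroup_fg _).2 ⟨{a}, by simp⟩)).elim
end
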